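/- arXiv:1501.05867 — 10 statements merged into one kernel-verified Lean document; each statement's English description precedes it below -/
import Mathlib

section
/- Let b(g,k) be real numbers indexed by integers g ≥ 1 and k, with b(g,k) = 0 unless 0 ≤ k ≤ g−1. For each g ≥ 1 define F_g on the positive reals by F_g(λ) = Σ_{k=0}^{g−1} b(g,k)·s(λ)^{−(4g+1+2k)}, and let D be the operator (Df)(λ) = f′(λ)/s(λ). If for every g ≥ 1 and every λ > 0 one has (D(D(D F_g)))(λ) = s(λ)²·(D F_{g+1})(λ) − c(λ)·F_{g+1}(λ), then for every g ≥ 1 and every integer k with 0 ≤ k ≤ g the three-term recurrence holds: (4g+2k+6)·b(g+1,k) = (4g+2k+1)·(4g+2k+3)·[(4g+2k+2)·b(g,k) + 4·(4g+2k−1)·b(g,k−1)]. -/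
/-!
On `λ > 0` the operator `D` maps `s^m` to `m c s^(m-2)` and `c s^m` to `(m+1) s^m + 4m s^(m-2)`
(because `c² = s² + 4`). Hence both sides of the differential recurrence are `c` times a finite
sum of powers of `s`; after cancelling `c`, the coefficient of `s^(-(4g+5+2k))` in the difference
is the defect of the three-term recurrence. Since `s(λ)⁻²` takes infinitely many values, the
polynomial in `s⁻²` formed by these coefficients vanishes identically.
-/

/-- `sh λ = e^λ - e^{-λ}`. -/
noncomputable def sh (l : ℝ) : ℝ := Real.exp l - Real.exp (-l)

/-- `ch λ = e^λ + e^{-λ}`. -/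
noncomputable def ch (l : ℝ) : ℝ := Real.exp l + Real.exp (-l)

/-- The operator `(Df)(λ) = f'(λ)/s(λ)`. -/
noncomputable def Dop (f : ℝ → ℝ) : ℝ → ℝ := fun l => deriv f l / sh l

open Finset

lemma sh_eq_two_mul_sinh (x : ℝ) : sh x = 2 * Real.sinh x := by
  rw [sh, Real.sinh_eq]; ring

lemma ch_eq_two_mul_cosh (x : ℝ) : ch x = 2 * Real.cosh x := by
  rw [ch, Real.cosh_eq]; ring

lemma hasDerivAt_sh (x : ℝ) : HasDerivAt sh (ch x) x := by
  simpa [funext sh_eq_two_mul_sinh, ch_eq_two_mul_cosh] using (Real.hasDerivAt_sinh x).const_mul 2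

lemma hasDerivAt_ch (x : ℝ) : HasDerivAt ch (sh x) x := by
  simpa [funext ch_eq_two_mul_cosh, sh_eq_two_mul_sinh] using (Real.hasDerivAt_cosh x).const_mul 2

lemma sh_pos {x : ℝ} (hx : 0 < x) : 0 < sh x := by
  rw [sh_eq_two_mul_sinh]; exact mul_pos two_pos (Real.sinh_pos_iff.2 hx)

lemma ch_pos (x : ℝ) : 0 < ch x := by
  rw [ch_eq_two_mul_cosh]; exact mul_pos two_pos (Real.cosh_pos x)

lemma ch_sq (x : ℝ) : ch x ^ 2 = sh x ^ 2 + 4 := by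
  rw [ch_eq_two_mul_cosh, sh_eq_two_mul_sinh]; linear_combination 4 * Real.cosh_sq x

lemma sh_strictMono : StrictMono sh := by
  intro x y h; rw [sh_eq_two_mul_sinh, sh_eq_two_mul_sinh]; linarith [Real.sinh_strictMono h]

lemma Dop_congr {f g : ℝ → ℝ} (h : Set.EqOn f g (Set.Ioi 0)) {x : ℝ} (hx : 0 < x) :
    Dop f x = Dop g x := by
  rw [Dop, Dop, (h.eventuallyEq_of_mem (Ioi_mem_nhds hx)).deriv_eq]

lemma Dop_add {f g : ℝ → ℝ} {x : ℝ} (hf : DifferentiableAt ℝ f x) (hg : DifferentiableAt ℝ g x) :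
    Dop (f + g) x = Dop f x + Dop g x := by
  rw [Dop, Dop, Dop, deriv_add hf hg, add_div]

section shSum

variable {ι : Type*} (s : Finset ι) (a : ι → ℝ) (m : ι → ℤ)

noncomputable def shSum (x : ℝ) : ℝ := ∑ i ∈ s, a i * sh x ^ m i

variable {s a m}

lemma hasDerivAt_shSum {x : ℝ} (hx : sh x ≠ 0) :
    HasDerivAt (shSum s a m) (ch x * ∑ i ∈ s, a i * m i * sh x ^ (m i - 1)) x := by
  refine (HasDerivAt.fun_sum (u := s) fun i _ =>
    ((hasDerivAt_zpow (m i) (sh x) (Or.inl hx)).comp x (hasDerivAt_sh x)).const_mul (a i))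
    |>.congr_deriv ?_
  rw [mul_sum]; exact sum_congr rfl fun i _ => by ring

lemma sh_sq_mul_shSum {x : ℝ} (hx : sh x ≠ 0) :
    sh x ^ 2 * shSum s a (fun i => m i - 2) x = shSum s a m x := by
  rw [shSum, shSum, mul_sum]
  refine sum_congr rfl fun i _ => ?_
  rw [mul_left_comm, ← zpow_natCast, ← zpow_add₀ hx]; push_cast; ring_nf

lemma Dop_shSum {x : ℝ} (hx : 0 < x) :
    Dop (shSum s a m) x = ch x * shSum s (fun i => a i * m i) (fun i => m i - 2) x := by
  have hs := (sh_pos hx).ne'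
  rw [Dop, (hasDerivAt_shSum hs).deriv, mul_div_assoc, sum_div, shSum]
  congr 1
  refine sum_congr rfl fun i _ => ?_
  rw [mul_div_assoc, div_eq_mul_inv, ← zpow_sub_one₀ hs, sub_sub]; norm_num

lemma sh_sq_mul_Dop_shSum_sub {x : ℝ} (hx : 0 < x) :
    sh x ^ 2 * Dop (shSum s a m) x - ch x * shSum s a m x =
      ch x * shSum s (fun i => a i * (m i - 1)) m x := by
  rw [Dop_shSum hx, mul_left_comm, sh_sq_mul_shSum (sh_pos hx).ne', ← mul_sub, shSum, shSum,
    shSum, ← sum_sub_distrib]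
  congr 1; exact sum_congr rfl fun i _ => by ring

lemma Dop_ch_mul_shSum {x : ℝ} (hx : 0 < x) :
    Dop (ch * shSum s a m) x =
      shSum s (fun i => a i * (m i + 1)) m x +
        shSum s (fun i => 4 * a i * m i) (fun i => m i - 2) x := by
  have hs := (sh_pos hx).ne'
  rw [Dop, ((hasDerivAt_ch x).mul (hasDerivAt_shSum hs)).deriv, div_eq_iff hs, ← mul_assoc,
    ← sq, ch_sq, shSum, shSum, shSum, mul_sum, mul_sum, ← sum_add_distrib, ← sum_add_distrib,
    sum_mul]
  refine sum_congr rfl fun i _ => ?_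
  rw [zpow_sub₀ hs, zpow_sub₀ hs, zpow_one]
  field_simp
  ring

lemma Dop_Dop_Dop_shSum {x : ℝ} (hx : 0 < x) :
    Dop (Dop (Dop (shSum s a m))) x =
      ch x * (shSum s (fun i => a i * m i * (m i - 1) * (m i - 2)) (fun i => m i - 4) x +
        shSum s (fun i => 4 * a i * m i * (m i - 2) * (m i - 4)) (fun i => m i - 6) x) := by
  have h1 : Set.EqOn (Dop (shSum s a m))
      (ch * shSum s (fun i => a i * m i) (fun i => m i - 2)) (Set.Ioi 0) :=
    fun y hy => Dop_shSum hy
  have h2 : Set.EqOn (Dop (Dop (shSum s a m)))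
      (shSum s (fun i => a i * m i * (m i - 1)) (fun i => m i - 2) +
        shSum s (fun i => 4 * a i * m i * (m i - 2)) (fun i => m i - 4)) (Set.Ioi 0) := by
    intro y hy
    rw [Dop_congr h1 hy, Dop_ch_mul_shSum hy]
    congr 1 <;> congr 1 <;> funext i <;> push_cast <;> ring
  have hs := (sh_pos hx).ne'
  rw [Dop_congr h2 hx, Dop_add (hasDerivAt_shSum hs).differentiableAt
    (hasDerivAt_shSum hs).differentiableAt, Dop_shSum hx, Dop_shSum hx, mul_add]
  congr 2 <;> congr 1 <;> funext i <;> push_cast <;> ring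

end shSum

lemma injOn_inv_sh_sq : Set.InjOn (fun x => (sh x ^ 2)⁻¹) (Set.Ioi 0) := by
  intro x hx y hy hxy
  have := (sq_eq_sq₀ (sh_pos hx).le (sh_pos hy).le).1 (inv_injective hxy)
  exact sh_strictMono.injective this

open Polynomial in
lemma eq_zero_of_sum_mul_sh_zpow_eq_zero {N : ℕ} {B : ℤ} {c : ℕ → ℝ}
    (h : ∀ x, 0 < x → ∑ j ∈ range N, c j * sh x ^ (B - 2 * j) = 0) {j : ℕ} (hj : j < N) :
    c j = 0 := by
  set p : ℝ[X] := ∑ j ∈ range N, C (c j) * X ^ j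
  have hroot : ∀ x, 0 < x → p.IsRoot (sh x ^ 2)⁻¹ := by
    intro x hx
    have hs := (sh_pos hx).ne'
    have : sh x ^ B * p.eval (sh x ^ 2)⁻¹ = 0 := by
      rw [← h x hx, eval_finsetSum, mul_sum]
      refine sum_congr rfl fun i _ => ?_
      rw [eval_mul, eval_C, eval_pow, eval_X, zpow_sub₀ hs, zpow_mul, zpow_natCast, zpow_two,
        div_eq_mul_inv, inv_pow, sq]
      ring
    exact (mul_eq_zero.1 this).resolve_left (zpow_ne_zero B hs)
  have hp : p = 0 := eq_zero_of_infinite_isRoot p <|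
    ((Set.Ioi_infinite 0).image injOn_inv_sh_sq).mono <| by rintro _ ⟨x, hx, rfl⟩; exact hroot x hx
  simpa [p, finsetSum_coeff, coeff_C_mul_X_pow, hj] using congrArg (coeff · j) hp

noncomputable def recurrenceDefect (b : ℕ → ℤ → ℝ) (g : ℕ) (k : ℤ) : ℝ :=
  (4 * (g : ℝ) + 2 * (k : ℝ) + 6) * b (g + 1) k -
    (4 * (g : ℝ) + 2 * (k : ℝ) + 1) * (4 * (g : ℝ) + 2 * (k : ℝ) + 3) *
      ((4 * (g : ℝ) + 2 * (k : ℝ) + 2) * b g k + 4 * (4 * (g : ℝ) + 2 * (k : ℝ) - 1) * b g (k - 1))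

lemma sum_recurrenceDefect_mul_sh_zpow_eq_zero {b : ℕ → ℤ → ℝ} {F : ℕ → ℝ → ℝ} {g : ℕ}
    (hbg : b g g = 0) (hbneg : b g (-1) = 0)
    (hFg : ∀ l, F g l = ∑ k ∈ range g, b g k * sh l ^ (-(4 * (g : ℤ) + 1 + 2 * (k : ℤ))))
    (hFg1 : ∀ l, F (g + 1) l =
      ∑ k ∈ range (g + 1), b (g + 1) k * sh l ^ (-(4 * ((g + 1 : ℕ) : ℤ) + 1 + 2 * (k : ℤ))))
    (hode : ∀ l, 0 < l →
      Dop (Dop (Dop (F g))) l = sh l ^ 2 * Dop (F (g + 1)) l - ch l * F (g + 1) l)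
    {x : ℝ} (hx : 0 < x) :
    ∑ j ∈ range (g + 1), recurrenceDefect b g j * sh x ^ (-(4 * g + 5) - 2 * (j : ℤ)) = 0 := by
  set e : ℕ → ℤ := fun j => -(4 * g + 5) - 2 * j with he
  have hF : F g = shSum (range g) (fun j => b g j) (fun j => e j + 4) := by
    funext l; rw [hFg, shSum]; congr! 3; ring
  have hF1 : F (g + 1) = shSum (range (g + 1)) (fun j => b (g + 1) j) e := by
    funext l; rw [hFg1, shSum]; congr! 3; push_cast; ring
  have hshSum :
      shSum (range g) (fun j => -((4 * g + 2 * j + 1) * (4 * g + 2 * j + 2) *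
        (4 * g + 2 * j + 3)) * b g j) e x +
      shSum (range g) (fun j => -(4 * (4 * g + 2 * j + 1) * (4 * g + 2 * j + 3) *
        (4 * g + 2 * j + 5)) * b g j) (fun j => e j - 2) x =
      shSum (range (g + 1)) (fun j => -(4 * g + 2 * j + 6) * b (g + 1) j) e x := by
    have h := hode x hx
    rw [hF, hF1, sh_sq_mul_Dop_shSum_sub hx, Dop_Dop_Dop_shSum hx] at h
    convert mul_left_cancel₀ (ch_pos x).ne' h using 2 <;> congr 1 <;> funext j <;>
      simp only [he] <;> push_cast <;> ring
  have hA : shSum (range g) (fun j => -((4 * g + 2 * j + 1) * (4 * g + 2 * j + 2) *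
      (4 * g + 2 * j + 3)) * b g j) e x = ∑ j ∈ range (g + 1), -((4 * g + 2 * j + 1) *
      (4 * g + 2 * j + 2) * (4 * g + 2 * j + 3)) * b g j * sh x ^ e j := by
    rw [sum_range_succ, hbg, mul_zero, zero_mul, add_zero, shSum]
  have hB : shSum (range g) (fun j => -(4 * (4 * g + 2 * j + 1) * (4 * g + 2 * j + 3) *
      (4 * g + 2 * j + 5)) * b g j) (fun j => e j - 2) x = ∑ j ∈ range (g + 1),
      -(4 * (4 * g + 2 * j - 1) * (4 * g + 2 * j + 1) * (4 * g + 2 * j + 3)) *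
        b g ((j : ℤ) - 1) * sh x ^ e j := by
    simp only [sum_range_succ', CharP.cast_eq_zero, zero_sub, hbneg, mul_zero, zero_mul, add_zero,
      shSum]
    refine sum_congr rfl fun j _ => ?_
    simp only [he]; push_cast; ring_nf
  rw [← sub_eq_zero.2 hshSum, hA, hB, shSum, ← sum_add_distrib, ← sum_sub_distrib]
  refine sum_congr rfl fun j _ => ?_
  simp only [he, recurrenceDefect]; push_cast; ring

theorem stmt0
    (b : ℕ → ℤ → ℝ)
    (hb_supp : ∀ g : ℕ, 1 ≤ g → ∀ k : ℤ, ¬ (0 ≤ k ∧ k ≤ (g : ℤ) - 1) → b g k = 0)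
    (F : ℕ → ℝ → ℝ)
    (hF : ∀ g : ℕ, 1 ≤ g → ∀ l : ℝ,
      F g l = ∑ k ∈ Finset.range g, b g k * (sh l) ^ (-(4 * (g : ℤ) + 1 + 2 * (k : ℤ))))
    (hode : ∀ g : ℕ, 1 ≤ g → ∀ l : ℝ, 0 < l →
      Dop (Dop (Dop (F g))) l = (sh l) ^ 2 * Dop (F (g + 1)) l - ch l * F (g + 1) l) :
    ∀ g : ℕ, 1 ≤ g → ∀ k : ℤ, 0 ≤ k → k ≤ (g : ℤ) →
      (4 * (g : ℝ) + 2 * (k : ℝ) + 6) * b (g + 1) k =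
        (4 * (g : ℝ) + 2 * (k : ℝ) + 1) * (4 * (g : ℝ) + 2 * (k : ℝ) + 3) *
          ((4 * (g : ℝ) + 2 * (k : ℝ) + 2) * b g k
            + 4 * (4 * (g : ℝ) + 2 * (k : ℝ) - 1) * b g (k - 1)) := by
  intro g hg k hk0 hkg
  have hsum (x : ℝ) (hx : 0 < x) := sum_recurrenceDefect_mul_sh_zpow_eq_zero
    (hb_supp g hg g (by omega)) (hb_supp g hg (-1) (by omega)) (hF g hg) (hF (g + 1) (by omega))
    (hode g hg) hx
  lift k to ℕ using hk0
  exact sub_eq_zero.1 (eq_zero_of_sum_mul_sh_zpow_eq_zero hsum (by omega))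
end

section
/- Let c : ℕ × ℕ → ℝ satisfy: c(g,n) = 0 whenever n < 2g; c(0,0) = 1; and the Harer–Zagier recursion (n+1)·c(g,n) = 2(2n−1)·c(g,n−1) + (2n−1)(n−1)(2n−3)·c(g−1,n−2) for all g ≥ 0 and n ≥ 1, where any term with a negative argument is read as 0. Suppose that for each g the series L_g(w) := Σ_{k=0}^∞ c(g,k)·w^{−2k−1} converges for every real w > 2. Then each L_g is three times differentiable on (2,∞) and for every w > 2 and every g ≥ 0: L_g‴(w) = (w² − 4)·L_{g+1}′(w) − w·L_{g+1}(w). -/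
/-!
Termwise differentiation of `L_g(w) = ∑ c_g(k) w^(-2k-1)` is legitimate on `(2, ∞)`: compared
with a radius `r ∈ (2, w)`, coefficients carrying a polynomial weight in `k` still give a
geometrically dominated series at `w`. The third derivative has coefficient
`-(2k+1)(2k+2)(2k+3) c_g(k)` at `w^(-2k-4)`, and on the right-hand side the coefficient of the same
power is a combination of `c_{g+1}(k+1)` and `c_{g+1}(k+2)`; the Harer–Zagier recursion at
`(g+1, k+2)` says precisely that the two agree.
-/

open Set

/-- `oddLaurent a 0` is the paper's `L_g` when `a = c g`; the shift `j` accounts for `j`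
differentiations, each of which lowers every exponent by one. -/
noncomputable def oddLaurent (a : ℕ → ℝ) (j : ℕ) (w : ℝ) : ℝ :=
  ∑' k : ℕ, a k * w ^ (-(2 * (k : ℤ)) - 1 - j)

def derivCoeff (a : ℕ → ℝ) (j k : ℕ) : ℝ :=
  -(2 * k + 1 + j) * a k

def OddLaurentSummable (R : ℝ) (a : ℕ → ℝ) : Prop :=
  ∀ r, R < r → Summable fun k : ℕ => a k * r ^ (-(2 * (k : ℤ)) - 1)

lemma zpow_le_zpow_left_of_nonpos₀ {K : Type*} [Field K] [LinearOrder K] [IsStrictOrderedRing K]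
    {r y : K} (hr : 0 < r) (hry : r ≤ y) {n : ℤ} (hn : n ≤ 0) :
    y ^ n ≤ r ^ n := by
  simpa [zpow_neg] using inv_anti₀ (zpow_pos hr _) (zpow_le_zpow_left₀ (neg_nonneg.2 hn) hr.le hry)

namespace OddLaurentSummable

variable {R : ℝ} {a : ℕ → ℝ}

/-- Against a radius `r ∈ (R, w)`, the terms at `w` are `k (r / w) ^ (2k + 1)` times a bounded
sequence. -/
lemma natCast_mul (hR : 0 ≤ R) (ha : OddLaurentSummable R a) :
    OddLaurentSummable R fun k => k * a k := by
  intro w hw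
  obtain ⟨r, hRr, hrw⟩ := exists_between hw
  have hr : 0 < r := hR.trans_lt hRr
  have hw0 : 0 < w := hr.trans hrw
  have hq : ‖(r / w) ^ 2‖ < 1 := by
    rw [norm_pow, Real.norm_eq_abs, abs_of_pos (by positivity)]
    exact pow_lt_one₀ (by positivity) ((div_lt_one hw0).2 hrw) two_ne_zero
  set M := ∑' i, |a i * r ^ (-(2 * (i : ℤ)) - 1)|
  have hM : ∀ k : ℕ, |a k * r ^ (-(2 * (k : ℤ)) - 1)| ≤ M :=
    fun k => (ha r hRr).abs.le_tsum k fun _ _ => abs_nonneg _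
  refine .of_norm_bounded
    ((summable_pow_mul_geometric_of_norm_lt_one 1 hq).mul_left (M * (r / w))) fun k => ?_
  have hzpow : w ^ (-(2 * (k : ℤ)) - 1) =
      r ^ (-(2 * (k : ℤ)) - 1) * (r / w * ((r / w) ^ 2) ^ k) := by
    rw [show -(2 * (k : ℤ)) - 1 = -((2 * k + 1 : ℕ) : ℤ) by push_cast; ring, zpow_neg, zpow_neg,
      zpow_natCast, zpow_natCast, ← pow_mul, ← pow_succ', div_pow]
    field_simp
  calc ‖k * a k * w ^ (-(2 * (k : ℤ)) - 1)‖
      = k * |a k * r ^ (-(2 * (k : ℤ)) - 1)| * (r / w * ((r / w) ^ 2) ^ k) := by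
        rw [hzpow, Real.norm_eq_abs, ← mul_assoc, abs_mul _ (r / w * _),
          abs_of_pos (by positivity : 0 < r / w * ((r / w) ^ 2) ^ k), mul_assoc, abs_mul,
          Nat.abs_cast]
    _ ≤ k * M * (r / w * ((r / w) ^ 2) ^ k) := by gcongr; exact hM k
    _ = M * (r / w) * ((k : ℝ) ^ 1 * ((r / w) ^ 2) ^ k) := by ring

lemma derivCoeff (hR : 0 ≤ R) (ha : OddLaurentSummable R a) (j : ℕ) :
    OddLaurentSummable R (derivCoeff a j) := by
  intro w hw
  refine (((ha.natCast_mul hR w hw).mul_left (-2)).add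
    ((ha w hw).mul_left (-(1 + (j : ℝ))))).congr fun k => ?_
  simp only [_root_.derivCoeff]
  ring

lemma summable_zpow_sub (hR : 0 ≤ R) (ha : OddLaurentSummable R a) (j : ℕ) {w : ℝ}
    (hw : R < w) : Summable fun k : ℕ => a k * w ^ (-(2 * (k : ℤ)) - 1 - j) := by
  have hw0 : w ≠ 0 := (hR.trans_lt hw).ne'
  refine ((ha w hw).div_const (w ^ (j : ℤ))).congr fun k => ?_
  rw [zpow_sub₀ hw0 _ (j : ℤ), mul_div_assoc]

lemma hasDerivAt (hR : 0 ≤ R) (ha : OddLaurentSummable R a) (j : ℕ) {w : ℝ} (hw : R < w) :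
    HasDerivAt (oddLaurent a j) (oddLaurent (_root_.derivCoeff a j) (j + 1) w) w := by
  obtain ⟨r, hRr, hrw⟩ := exists_between hw
  have hr : 0 < r := hR.trans_lt hRr
  have hexp : ∀ k : ℕ, -(2 * (k : ℤ)) - 1 - ((j + 1 : ℕ) : ℤ) = -(2 * (k : ℤ)) - 1 - j - 1 := by
    intro k; push_cast; ring
  refine hasDerivAt_tsum_of_isPreconnected
    (g := fun k y => a k * y ^ (-(2 * (k : ℤ)) - 1 - j))
    (g' := fun k y => _root_.derivCoeff a j k * y ^ (-(2 * (k : ℤ)) - 1 - ((j + 1 : ℕ) : ℤ)))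
    ((ha.derivCoeff hR j).summable_zpow_sub hR (j + 1) hRr).norm isOpen_Ioi isPreconnected_Ioi
    (fun k y hy => ?_) (fun k y hy => ?_) hrw (ha.summable_zpow_sub hR j hw) hrw
  · refine ((hasDerivAt_zpow _ y (.inl (hr.trans hy).ne')).const_mul (a k)).congr_deriv ?_
    simp only [_root_.derivCoeff, hexp]
    push_cast
    ring
  · rw [norm_mul, norm_mul]
    gcongr
    rw [Real.norm_eq_abs, Real.norm_eq_abs, abs_of_pos (zpow_pos hr _),
      abs_of_pos (zpow_pos (hr.trans hy) _)]
    exact zpow_le_zpow_left_of_nonpos₀ hr (le_of_lt hy) (by omega)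

lemma eqOn_deriv (hR : 0 ≤ R) (ha : OddLaurentSummable R a) {j : ℕ} {f : ℝ → ℝ}
    (hf : EqOn f (oddLaurent a j) (Ioi R)) :
    EqOn (deriv f) (oddLaurent (_root_.derivCoeff a j) (j + 1)) (Ioi R) := fun _ hw =>
  (hf.deriv isOpen_Ioi hw).trans (ha.hasDerivAt hR j hw).deriv

lemma hasDerivAt_of_eqOn (hR : 0 ≤ R) (ha : OddLaurentSummable R a) {j : ℕ} {f : ℝ → ℝ}
    (hf : EqOn f (oddLaurent a j) (Ioi R)) {w : ℝ} (hw : R < w) :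
    HasDerivAt f (oddLaurent (_root_.derivCoeff a j) (j + 1) w) w :=
  (ha.hasDerivAt hR j hw).congr_of_eventuallyEq (Filter.eventuallyEq_of_mem (Ioi_mem_nhds hw) hf)

end OddLaurentSummable

theorem oddLaurent_third_deriv_eq {R : ℝ} {a b : ℕ → ℝ} (hR : 0 ≤ R)
    (hb : OddLaurentSummable R b) (hb0 : b 0 = 0) (hb1 : b 1 = 0)
    (hrec : ∀ n : ℕ, ((n : ℝ) + 3) * b (n + 2) =
      2 * (2 * n + 3) * b (n + 1) + (2 * n + 3) * (n + 1) * (2 * n + 1) * a n)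
    {w : ℝ} (hw : R < w) :
    oddLaurent (derivCoeff (derivCoeff (derivCoeff a 0) 1) 2) 3 w =
      (w ^ 2 - 4) * oddLaurent (derivCoeff b 0) 1 w - w * oddLaurent b 0 w := by
  have hw0 : w ≠ 0 := (hR.trans_lt hw).ne'
  -- The right side is termwise `F k + H k` (`hrhs`); the recursion makes the `k`-th term of the
  -- left side `F (k + 2) + H (k + 1)` (`hlhs`), and the boundary terms `F 0, F 1, H 0` vanish.
  set F : ℕ → ℝ := fun k => -(2 * k + 2) * b k * w ^ (-(2 * (k : ℤ)))
  set H : ℕ → ℝ := fun k => 4 * (2 * k + 1) * b k * w ^ (-(2 * (k : ℤ)) - 2)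
  have hF : Summable F := by
    refine ((hb.derivCoeff hR 1 w hw).mul_left w).congr fun k => ?_
    simp only [F, derivCoeff, zpow_sub_one₀ hw0]
    field_simp
    push_cast
    ring
  have hH : Summable H := by
    refine (((hb.derivCoeff hR 0).summable_zpow_sub hR 1 hw).mul_left (-4)).congr fun k => ?_
    simp only [H, derivCoeff]
    rw [show -(2 * (k : ℤ)) - 1 - ((1 : ℕ) : ℤ) = -(2 * (k : ℤ)) - 2 by push_cast; ring]
    push_cast
    ring
  have hF_shift : ∑' k, F (k + 2) = ∑' k, F k := by
    have hF0 : F 0 = 0 := by simp [F, hb0]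
    have hF1 : F 1 = 0 := by simp [F, hb1]
    rw [hF.tsum_eq_zero_add, ((summable_nat_add_iff 1).2 hF).tsum_eq_zero_add, hF0, zero_add,
      zero_add, hF1, zero_add]
  have hH_shift : ∑' k, H (k + 1) = ∑' k, H k := by
    have hH0 : H 0 = 0 := by simp [H, hb0]
    rw [hH.tsum_eq_zero_add, hH0, zero_add]
  have hlhs : ∀ k : ℕ, derivCoeff (derivCoeff (derivCoeff a 0) 1) 2 k *
      w ^ (-(2 * (k : ℤ)) - 1 - ((3 : ℕ) : ℤ)) = F (k + 2) + H (k + 1) := by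
    intro k
    simp only [F, H, derivCoeff]
    rw [show -(2 * ((k + 2 : ℕ) : ℤ)) = -(2 * (k : ℤ)) - 1 - ((3 : ℕ) : ℤ) by push_cast; ring,
      show -(2 * ((k + 1 : ℕ) : ℤ)) - 2 = -(2 * (k : ℤ)) - 1 - ((3 : ℕ) : ℤ) by push_cast; ring]
    push_cast
    linear_combination (2 * w ^ (-(2 * (k : ℤ)) - 1 - ((3 : ℕ) : ℤ))) * hrec k
  have hrhs : ∀ k : ℕ, (w ^ 2 - 4) * (derivCoeff b 0 k * w ^ (-(2 * (k : ℤ)) - 1 - ((1 : ℕ) : ℤ)))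
      - w * (b k * w ^ (-(2 * (k : ℤ)) - 1 - ((0 : ℕ) : ℤ))) = F k + H k := by
    intro k
    have h1 : w ^ (-(2 * (k : ℤ)) - 1 - ((0 : ℕ) : ℤ)) = w ^ (-(2 * (k : ℤ)) - 2) * w := by
      rw [← zpow_add_one₀ hw0]; push_cast; ring_nf
    have h2 : w ^ (-(2 * (k : ℤ))) = w ^ (-(2 * (k : ℤ)) - 2) * w ^ 2 := by
      rw [← zpow_natCast, ← zpow_add₀ hw0]; push_cast; ring_nf
    simp only [F, H, derivCoeff, h1, h2]
    rw [show -(2 * (k : ℤ)) - 1 - ((1 : ℕ) : ℤ) = -(2 * (k : ℤ)) - 2 by push_cast; ring]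
    push_cast
    ring
  calc oddLaurent (derivCoeff (derivCoeff (derivCoeff a 0) 1) 2) 3 w
      = ∑' k, (F (k + 2) + H (k + 1)) := tsum_congr hlhs
    _ = ∑' k, (F k + H k) := by
        rw [((summable_nat_add_iff 2).2 hF).tsum_add ((summable_nat_add_iff 1).2 hH), hF_shift,
          hH_shift, hF.tsum_add hH]
    _ = (w ^ 2 - 4) * oddLaurent (derivCoeff b 0) 1 w - w * oddLaurent b 0 w := by
        rw [oddLaurent, oddLaurent, ← tsum_mul_left, ← tsum_mul_left,
          ← ((((hb.derivCoeff hR 0).summable_zpow_sub hR 1 hw).mul_left _).tsum_sub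
            ((hb.summable_zpow_sub hR 0 hw).mul_left _))]
        exact tsum_congr fun k => (hrhs k).symm

theorem stmt1_general
    (c : ℕ → ℕ → ℝ)
    (hvanish : ∀ g n : ℕ, n < 2 * g → c g n = 0)
    (hHZ : ∀ g n : ℕ, 1 ≤ n →
      ((n : ℝ) + 1) * c g n =
        2 * (2 * (n : ℝ) - 1) * c g (n - 1) +
          (2 * (n : ℝ) - 1) * ((n : ℝ) - 1) * (2 * (n : ℝ) - 3) *
            (if 2 ≤ n ∧ 1 ≤ g then c (g - 1) (n - 2) else 0))
    (L : ℕ → ℝ → ℝ)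
    (hL : ∀ g : ℕ, ∀ w : ℝ, L g w = ∑' k : ℕ, c g k * w ^ (-(2 * (k : ℤ)) - 1))
    (hconv : ∀ g : ℕ, ∀ w : ℝ, 2 < w →
      Summable (fun k : ℕ => c g k * w ^ (-(2 * (k : ℤ)) - 1))) :
    ∀ g : ℕ, ∀ w : ℝ, 2 < w →
      DifferentiableAt ℝ (L g) w ∧
      DifferentiableAt ℝ (deriv (L g)) w ∧
      DifferentiableAt ℝ (deriv (deriv (L g))) w ∧
      deriv (deriv (deriv (L g))) w =
        (w ^ 2 - 4) * deriv (L (g + 1)) w - w * L (g + 1) w := by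
  intro g w hw
  have hR : (0 : ℝ) ≤ 2 := zero_le_two
  have hc : ∀ g, OddLaurentSummable 2 (c g) := hconv
  have hL0 : ∀ g, EqOn (L g) (oddLaurent (c g) 0) (Ioi 2) := fun g x _ => by
    simp [hL, oddLaurent]
  have hL1 : ∀ g, EqOn (deriv (L g)) (oddLaurent (derivCoeff (c g) 0) 1) (Ioi 2) :=
    fun g => (hc g).eqOn_deriv hR (hL0 g)
  have hc1 := (hc g).derivCoeff hR 0
  have hL2 := hc1.eqOn_deriv hR (hL1 g)
  have hL3 := (hc1.derivCoeff hR 1).hasDerivAt_of_eqOn hR hL2 hw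
  refine ⟨((hc g).hasDerivAt_of_eqOn hR (hL0 g) hw).differentiableAt,
    (hc1.hasDerivAt_of_eqOn hR (hL1 g) hw).differentiableAt, hL3.differentiableAt, ?_⟩
  rw [hL3.deriv, hL1 (g + 1) hw, hL0 (g + 1) hw]
  refine oddLaurent_third_deriv_eq hR (hc (g + 1)) (hvanish _ _ (by omega))
    (hvanish _ _ (by omega)) (fun n => ?_) hw
  have h := hHZ (g + 1) (n + 2) (by omega)
  rw [if_pos ⟨by omega, by omega⟩, show n + 2 - 1 = n + 1 by omega, Nat.add_sub_cancel,
    Nat.add_sub_cancel] at h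
  push_cast at h
  linear_combination h

theorem stmt1
    (c : ℕ → ℕ → ℝ)
    (hvanish : ∀ g n : ℕ, n < 2 * g → c g n = 0)
    (hinit : c 0 0 = 1)
    (hHZ : ∀ g n : ℕ, 1 ≤ n →
      ((n : ℝ) + 1) * c g n =
        2 * (2 * (n : ℝ) - 1) * c g (n - 1) +
          (2 * (n : ℝ) - 1) * ((n : ℝ) - 1) * (2 * (n : ℝ) - 3) *
            (if 2 ≤ n ∧ 1 ≤ g then c (g - 1) (n - 2) else 0))
    (L : ℕ → ℝ → ℝ)
    (hL : ∀ g : ℕ, ∀ w : ℝ, L g w = ∑' k : ℕ, c g k * w ^ (-(2 * (k : ℤ)) - 1))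
    (hconv : ∀ g : ℕ, ∀ w : ℝ, 2 < w →
      Summable (fun k : ℕ => c g k * w ^ (-(2 * (k : ℤ)) - 1))) :
    ∀ g : ℕ, ∀ w : ℝ, 2 < w →
      DifferentiableAt ℝ (L g) w ∧
      DifferentiableAt ℝ (deriv (L g)) w ∧
      DifferentiableAt ℝ (deriv (deriv (L g))) w ∧
      deriv (deriv (deriv (L g))) w =
        (w ^ 2 - 4) * deriv (L (g + 1)) w - w * L (g + 1) w :=
  stmt1_general c hvanish hHZ L hL hconv
end

section
/- Let b(g,k) be Harer–Zagier coefficients. Then for every g ≥ 1: b(g,g−1) = 2^{g−1}·(6g−3)!!/(3^g·g!), and equivalently the renormalized coefficient 𝔟(g,g−1) := b(g,g−1)/(6g−3)!! equals 2^{g−1}/(3^g·g!). -/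
open scoped Nat

theorem stmt3
    (b : ℕ → ℤ → ℚ)
    (hb_supp : ∀ g : ℕ, 1 ≤ g → ∀ k : ℤ, ¬ (0 ≤ k ∧ k ≤ (g : ℤ) - 1) → b g k = 0)
    (hb1 : b 1 0 = 1)
    (hrec : ∀ g : ℕ, 1 ≤ g → ∀ k : ℤ, 0 ≤ k → k ≤ (g : ℤ) →
      (4 * (g : ℚ) + 2 * (k : ℚ) + 6) * b (g + 1) k =
        (4 * (g : ℚ) + 2 * (k : ℚ) + 1) * (4 * (g : ℚ) + 2 * (k : ℚ) + 3) *
          ((4 * (g : ℚ) + 2 * (k : ℚ) + 2) * b g k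
            + 4 * (4 * (g : ℚ) + 2 * (k : ℚ) - 1) * b g (k - 1))) :
    ∀ g : ℕ, 1 ≤ g →
      b g ((g : ℤ) - 1) = 2 ^ (g - 1) * (((6 * g - 3)‼ : ℕ) : ℚ) / (3 ^ g * (g ! : ℚ)) ∧
      b g ((g : ℤ) - 1) / (((6 * g - 3)‼ : ℕ) : ℚ) = 2 ^ (g - 1) / (3 ^ g * (g ! : ℚ)) := by
  have main : ∀ g : ℕ, 1 ≤ g →
      b g ((g : ℤ) - 1) = 2 ^ (g - 1) * (((6 * g - 3)‼ : ℕ) : ℚ) / (3 ^ g * (g ! : ℚ)) := by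
    intro g hg
    induction g, hg using Nat.le_induction with
    | base =>
      norm_num [hb1, Nat.doubleFactorial]
    | succ g hg ih =>
      obtain ⟨m, rfl⟩ : ∃ m, g = m + 1 := ⟨g - 1, by omega⟩
      rw [show 6 * (m + 1) - 3 = 6 * m + 3 by omega, show m + 1 - 1 = m by omega] at ih
      have hzero : b (m + 1) ((m + 1 : ℕ) : ℤ) = 0 := by
        apply hb_supp (m + 1) hg
        rintro ⟨h1, h2⟩
        omega
      have hrec' := hrec (m + 1) hg ((m + 1 : ℕ) : ℤ) (by positivity) le_rfl
      rw [hzero] at hrec'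
      push_cast at hrec'
      have hb' : b (m + 1 + 1) ((m + 1 : ℕ) : ℤ) =
          (4 * ((m : ℚ) + 1) + 2 * ((m : ℚ) + 1) + 1) * (4 * ((m : ℚ) + 1) + 2 * ((m : ℚ) + 1) + 3) *
            (4 * (4 * ((m : ℚ) + 1) + 2 * ((m : ℚ) + 1) - 1) * b (m + 1) (((m + 1 : ℕ) : ℤ) - 1)) /
            (4 * ((m : ℚ) + 1) + 2 * ((m : ℚ) + 1) + 6) := by
        have hne : (4 * ((m : ℚ) + 1) + 2 * ((m : ℚ) + 1) + 6) ≠ 0 := by positivity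
        rw [eq_div_iff hne]
        push_cast
        linarith [hrec']
      have hcast : ((m + 1 + 1 : ℕ) : ℤ) - 1 = ((m + 1 : ℕ) : ℤ) := by push_cast; ring
      rw [hcast, hb', ih]
      rw [show 6 * (m + 1 + 1) - 3 = 6 * m + 9 by omega,
        show (6 * m + 9)‼ = (6 * m + 9) * ((6 * m + 7) * ((6 * m + 5) * (6 * m + 3)‼)) by
          rw [show 6 * m + 9 = (6 * m + 7) + 2 by ring, Nat.doubleFactorial_add_two,
            show 6 * m + 7 = (6 * m + 5) + 2 by ring, Nat.doubleFactorial_add_two,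
            show 6 * m + 5 = (6 * m + 3) + 2 by ring, Nat.doubleFactorial_add_two],
        show m + 1 + 1 - 1 = m + 1 by omega,
        Nat.factorial_succ (m + 1), pow_succ]
      have hfacpos : (0 : ℚ) < ((m + 1)! : ℚ) := by exact_mod_cast Nat.factorial_pos (m + 1)
      have h3pos : (0 : ℚ) < (3 : ℚ) ^ (m + 1) := by positivity
      push_cast
      field_simp
      ring
  intro g hg
  refine ⟨main g hg, ?_⟩
  have hne : (((6 * g - 3)‼ : ℕ) : ℚ) ≠ 0 := by
    exact_mod_cast (Nat.doubleFactorial_pos _).ne'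
  rw [main g hg]
  have h2 : (3 : ℚ) ^ g * (g ! : ℚ) ≠ 0 := by
    have := Nat.factorial_pos g
    positivity
  field_simp
end

section
/- Let b(g,k) be Harer–Zagier coefficients. Then for every g ≥ 1: b(g,0) = (4g)!/(8^g·g!·(2g+1)!!), and equivalently the renormalized coefficient 𝔟(g,0) := b(g,0)/(4g−1)!! equals 1/(2g+1). -/
open scoped Nat

lemma stmt4_nat_id (m : ℕ) :
    (2 * (m + 1) + 1) * (4 * (m + 1))! =
      8 ^ (m + 1) * (m + 1)! * (2 * (m + 1) + 1)‼ * (4 * (m + 1) - 1)‼ := by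
  have h1 : (4 * (m + 1))! = (2 * (2 * m + 2))‼ * (4 * m + 3)‼ := by
    have := Nat.factorial_eq_mul_doubleFactorial (4 * m + 3)
    have e : 4 * m + 3 + 1 = 2 * (2 * m + 2) := by ring
    rw [e] at this
    have e2 : 4 * (m + 1) = 2 * (2 * m + 2) := by ring
    rw [e2, this]
  have h2 : (2 * (2 * m + 2))‼ = 2 ^ (2 * m + 2) * (2 * m + 2)! := Nat.doubleFactorial_two_mul _
  have h3 : (2 * m + 3)! = (2 * m + 3)‼ * (2 * (m + 1))‼ := by
    have := Nat.factorial_eq_mul_doubleFactorial (2 * m + 2)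
    simp only [show 2 * m + 2 + 1 = 2 * m + 3 from by ring,
      show 2 * m + 2 = 2 * (m + 1) from by ring] at this
    exact this
  have h4 : (2 * (m + 1))‼ = 2 ^ (m + 1) * (m + 1)! := Nat.doubleFactorial_two_mul _
  have e5 : 4 * (m + 1) - 1 = 4 * m + 3 := by omega
  have e6 : 2 * (m + 1) + 1 = 2 * m + 3 := by ring
  have h7 : (2 * m + 3) * (2 * m + 2)! = (2 * m + 3)! := by
    have := Nat.factorial_succ (2 * m + 2)
    simp only [show 2 * m + 2 + 1 = 2 * m + 3 from by ring] at this
    omega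
  have h8 : (2 * m + 3) * (2 * m + 2)! = (2 * m + 3)‼ * (2 ^ (m + 1) * (m + 1)!) := by
    rw [h7, h3, h4]
  have hp : (8 : ℕ) ^ (m + 1) = 2 ^ (2 * m + 2) * 2 ^ (m + 1) := by
    rw [← pow_add, show (8:ℕ) = 2 ^ 3 from rfl, ← pow_mul]
    congr 1
    omega
  rw [e5, e6, h1, h2, hp]
  calc (2 * m + 3) * (2 ^ (2 * m + 2) * (2 * m + 2)! * (4 * m + 3)‼)
      = 2 ^ (2 * m + 2) * ((2 * m + 3) * (2 * m + 2)!) * (4 * m + 3)‼ := by ring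
    _ = 2 ^ (2 * m + 2) * ((2 * m + 3)‼ * (2 ^ (m + 1) * (m + 1)!)) * (4 * m + 3)‼ := by
        rw [h8]
    _ = 2 ^ (2 * m + 2) * 2 ^ (m + 1) * (m + 1)! * (2 * m + 3)‼ * (4 * m + 3)‼ := by ring

lemma stmt4_key
    (b : ℕ → ℤ → ℚ)
    (hb_supp : ∀ g : ℕ, 1 ≤ g → ∀ k : ℤ, ¬ (0 ≤ k ∧ k ≤ (g : ℤ) - 1) → b g k = 0)
    (hb1 : b 1 0 = 1)
    (hrec : ∀ g : ℕ, 1 ≤ g → ∀ k : ℤ, 0 ≤ k → k ≤ (g : ℤ) →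
      (4 * (g : ℚ) + 2 * (k : ℚ) + 6) * b (g + 1) k =
        (4 * (g : ℚ) + 2 * (k : ℚ) + 1) * (4 * (g : ℚ) + 2 * (k : ℚ) + 3) *
          ((4 * (g : ℚ) + 2 * (k : ℚ) + 2) * b g k
            + 4 * (4 * (g : ℚ) + 2 * (k : ℚ) - 1) * b g (k - 1))) :
    ∀ g : ℕ, 1 ≤ g → b g 0 = (((4 * g - 1)‼ : ℕ) : ℚ) / (2 * (g : ℚ) + 1) := by
  intro g hg
  induction g with
  | zero => omega
  | succ m ih =>
    rcases Nat.eq_or_lt_of_le hg with h1 | h1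
    · -- m + 1 = 1
      have : m = 0 := by omega
      subst this
      norm_num [hb1]
    · have hm : 1 ≤ m := by omega
      have IH := ih hm
      have hzero : b m (-1) = 0 := by
        apply hb_supp m hm
        intro ⟨h, _⟩; omega
      have hr := hrec m hm 0 le_rfl (by exact_mod_cast Nat.zero_le m)
      rw [show (0:ℤ) - 1 = -1 from rfl, hzero] at hr
      push_cast at hr
      -- hr : (4m+6) * b (m+1) 0 = (4m+1)(4m+3)((4m+2) * b m 0 + 0)
      obtain ⟨n, rfl⟩ : ∃ n, m = n + 1 := ⟨m - 1, by omega⟩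
      have e1 : 4 * (n + 1 + 1) - 1 = 4 * n + 3 + 2 + 2 := by omega
      have e2 : 4 * (n + 1) - 1 = 4 * n + 3 := by omega
      rw [e2] at IH
      rw [e1, Nat.doubleFactorial_add_two, Nat.doubleFactorial_add_two]
      rw [IH] at hr
      have h6 : (4 * ((n:ℚ) + 1) + 6) ≠ 0 := by positivity
      have h21 : (2 * ((n:ℚ) + 1) + 1) ≠ 0 := by positivity
      have h23 : (2 * ((n:ℚ) + 1 + 1) + 1) ≠ 0 := by positivity
      push_cast at hr ⊢
      field_simp at hr ⊢
      apply mul_left_cancel₀ (show (2 * (2 * (n:ℚ) + 3)) ≠ 0 by positivity)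
      linear_combination hr

theorem stmt4
    (b : ℕ → ℤ → ℚ)
    (hb_supp : ∀ g : ℕ, 1 ≤ g → ∀ k : ℤ, ¬ (0 ≤ k ∧ k ≤ (g : ℤ) - 1) → b g k = 0)
    (hb1 : b 1 0 = 1)
    (hrec : ∀ g : ℕ, 1 ≤ g → ∀ k : ℤ, 0 ≤ k → k ≤ (g : ℤ) →
      (4 * (g : ℚ) + 2 * (k : ℚ) + 6) * b (g + 1) k =
        (4 * (g : ℚ) + 2 * (k : ℚ) + 1) * (4 * (g : ℚ) + 2 * (k : ℚ) + 3) *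
          ((4 * (g : ℚ) + 2 * (k : ℚ) + 2) * b g k
            + 4 * (4 * (g : ℚ) + 2 * (k : ℚ) - 1) * b g (k - 1))) :
    ∀ g : ℕ, 1 ≤ g →
      b g 0 = ((4 * g)! : ℚ) / (8 ^ g * (g ! : ℚ) * (((2 * g + 1)‼ : ℕ) : ℚ)) ∧
      b g 0 / (((4 * g - 1)‼ : ℕ) : ℚ) = 1 / (2 * (g : ℚ) + 1) := by
  intro g hg
  have key := stmt4_key b hb_supp hb1 hrec g hg
  obtain ⟨m, rfl⟩ : ∃ m, g = m + 1 := ⟨g - 1, by omega⟩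
  have hid := stmt4_nat_id m
  have hdf : (0:ℚ) < (((4 * (m+1) - 1)‼ : ℕ) : ℚ) := by
    exact_mod_cast Nat.doubleFactorial_pos _
  have hdf2 : (0:ℚ) < (((2 * (m+1) + 1)‼ : ℕ) : ℚ) := by
    exact_mod_cast Nat.doubleFactorial_pos _
  have hfac : (0:ℚ) < ((m+1)! : ℚ) := by exact_mod_cast (m+1).factorial_pos
  have h21 : (2 * ((m:ℚ) + 1) + 1) ≠ 0 := by positivity
  constructor
  · rw [key]
    have hidQ : (2 * ((m:ℚ) + 1) + 1) * ((4 * (m + 1))! : ℚ) =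
        8 ^ (m + 1) * ((m + 1)! : ℚ) * (((2 * (m + 1) + 1)‼ : ℕ) : ℚ) *
          (((4 * (m + 1) - 1)‼ : ℕ) : ℚ) := by
      exact_mod_cast hid
    push_cast
    push_cast at hidQ
    rw [div_eq_div_iff (by positivity) (by positivity)]
    linear_combination -hidQ
  · rw [key, div_div]
    rw [div_eq_div_iff (by positivity) (by positivity)]
    push_cast
    ring
end

section
/- Let b(g,k) be Harer–Zagier coefficients and let 𝔟(g,k) := b(g,k)/(4g+2k−1)!! be the renormalized coefficients. Then for every g ≥ 2: 𝔟(g,g−2) = (9/10)·g·(g−1)·𝔟(g,g−1), and explicitly b(g,g−2) = (1/5)·2^{g−2}·(6g−5)!!/(3^{g−2}·(g−2)!). -/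
/-!
Dividing the recurrence by `(4g+2k+3)‼` turns it into
`(4g+2k+6) 𝔟(g+1,k) = (4g+2k+2) 𝔟(g,k) + 4 𝔟(g,k-1)`.
On the diagonal `k = g` the first term vanishes, so `𝔟(g+1,g) = 2/(3(g+1)) 𝔟(g,g-1)`, which gives
`𝔟(g,g-1) = 2^(g-1) / (3^g g!)`. At `k = g-1` the recurrence then shows that the ratio
`𝔟(g,g-2) / 𝔟(g,g-1) = (9/10) g (g-1)` propagates from `g` to `g+1`; it holds at `g = 2`.
-/

open scoped Nat

lemma Nat.cast_doubleFactorial_ne_zero {R : Type*} [AddMonoidWithOne R] [CharZero R] (n : ℕ) :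
    ((n‼ : ℕ) : R) ≠ 0 :=
  Nat.cast_ne_zero.mpr (Nat.doubleFactorial_pos n).ne'

namespace HarerZagier

def VanishesOutside (b : ℕ → ℤ → ℚ) : Prop :=
  ∀ g : ℕ, 1 ≤ g → ∀ k : ℤ, ¬ (0 ≤ k ∧ k ≤ (g : ℤ) - 1) → b g k = 0

def Recurrence (b : ℕ → ℤ → ℚ) : Prop :=
  ∀ g : ℕ, 1 ≤ g → ∀ k : ℤ, 0 ≤ k → k ≤ (g : ℤ) →
    (4 * (g : ℚ) + 2 * (k : ℚ) + 6) * b (g + 1) k =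
      (4 * (g : ℚ) + 2 * (k : ℚ) + 1) * (4 * (g : ℚ) + 2 * (k : ℚ) + 3) *
        ((4 * (g : ℚ) + 2 * (k : ℚ) + 2) * b g k
          + 4 * (4 * (g : ℚ) + 2 * (k : ℚ) - 1) * b g (k - 1))

/-- The renormalized coefficient `𝔟(g,k)`. -/
def renorm (b : ℕ → ℤ → ℚ) (g k : ℕ) : ℚ :=
  b g k / ((4 * g + 2 * k - 1)‼ : ℕ)

variable {b : ℕ → ℤ → ℚ}

lemma renorm_recurrence (hrec : Recurrence b) {g k : ℕ} (hk : k + 1 ≤ g) :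
    (4 * (g : ℚ) + 2 * k + 8) * renorm b (g + 1) (k + 1) =
      (4 * (g : ℚ) + 2 * k + 4) * renorm b g (k + 1) + 4 * renorm b g k := by
  have hr := hrec g (by omega) ((k + 1 : ℕ) : ℤ) (by positivity) (by exact_mod_cast hk)
  rw [show ((k + 1 : ℕ) : ℤ) - 1 = k by push_cast; ring] at hr
  obtain ⟨N, hN⟩ : ∃ N, 4 * g + 2 * k - 1 = N := ⟨_, rfl⟩
  have hdf₀ : 4 * g + 2 * (k + 1) - 1 = N + 2 := by omega
  have hdf₁ : 4 * (g + 1) + 2 * (k + 1) - 1 = N + 6 := by omega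
  have hNq : (N : ℚ) = 4 * g + 2 * k - 1 := by
    rw [← hN, Nat.cast_sub (show 1 ≤ 4 * g + 2 * k by omega)]; push_cast; ring
  unfold renorm
  rw [hN, hdf₀, hdf₁, Nat.doubleFactorial_add_two, Nat.doubleFactorial_add_two,
    Nat.doubleFactorial_add_two]
  have := Nat.cast_doubleFactorial_ne_zero (R := ℚ) N
  push_cast at hr ⊢
  field_simp
  rw [hNq]
  linear_combination hr

lemma renorm_leading_succ (hsupp : VanishesOutside b) (hrec : Recurrence b) (g : ℕ) :
    3 * ((g : ℚ) + 2) * renorm b (g + 2) (g + 1) = 2 * renorm b (g + 1) g := by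
  have hdiag : renorm b (g + 1) (g + 1) = 0 := by
    rw [renorm, hsupp (g + 1) (by omega) _ (by push_cast; omega), zero_div]
  have h : (4 * ((g + 1 : ℕ) : ℚ) + 2 * g + 8) * renorm b (g + 2) (g + 1) =
      (4 * ((g + 1 : ℕ) : ℚ) + 2 * g + 4) * renorm b (g + 1) (g + 1) + 4 * renorm b (g + 1) g :=
    renorm_recurrence hrec le_rfl
  rw [hdiag] at h
  push_cast at h
  linear_combination h / 2

lemma renorm_leading (hsupp : VanishesOutside b) (hb1 : b 1 0 = 1) (hrec : Recurrence b)
    (g : ℕ) : renorm b (g + 1) g = 2 ^ g / (3 ^ (g + 1) * (g + 1)!) := by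
  induction g with
  | zero => simp [renorm, hb1, Nat.doubleFactorial]
  | succ g ih =>
    have h := renorm_leading_succ hsupp hrec g
    rw [ih] at h
    show renorm b (g + 2) (g + 1) = _
    rw [eq_div_iff (by positivity), Nat.factorial_succ (g + 1)]
    push_cast
    field_simp at h
    linear_combination h

lemma renorm_two_zero (hsupp : VanishesOutside b) (hb1 : b 1 0 = 1) (hrec : Recurrence b) :
    renorm b 2 0 = 1 / 5 := by
  have h := hrec 1 le_rfl 0 le_rfl (by norm_num)
  rw [hsupp 1 le_rfl (0 - 1) (by norm_num), hb1] at h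
  simp only [renorm, Nat.doubleFactorial]
  norm_num at h ⊢
  linarith

lemma renorm_subleading (hsupp : VanishesOutside b) (hb1 : b 1 0 = 1) (hrec : Recurrence b)
    (g : ℕ) :
    renorm b (g + 2) g = 9 / 10 * (g + 2) * (g + 1) * renorm b (g + 2) (g + 1) := by
  induction g with
  | zero =>
    rw [renorm_two_zero hsupp hb1 hrec, renorm_leading hsupp hb1 hrec 1]
    norm_num [Nat.factorial]
  | succ g ih =>
    have h : (4 * ((g + 2 : ℕ) : ℚ) + 2 * g + 8) * renorm b (g + 3) (g + 1) =
        (4 * ((g + 2 : ℕ) : ℚ) + 2 * g + 4) * renorm b (g + 2) (g + 1) +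
          4 * renorm b (g + 2) g :=
      renorm_recurrence hrec (by omega)
    have hdiag := renorm_leading_succ hsupp hrec (g + 1)
    rw [ih] at h
    push_cast at h hdiag ⊢
    apply mul_left_cancel₀ (show (6 * g + 16 : ℚ) ≠ 0 by positivity)
    linear_combination h - 3 / 10 * (g + 2) * (6 * g + 16) * hdiag

end HarerZagier

open HarerZagier in
theorem stmt5
    (b : ℕ → ℤ → ℚ)
    (hb_supp : ∀ g : ℕ, 1 ≤ g → ∀ k : ℤ, ¬ (0 ≤ k ∧ k ≤ (g : ℤ) - 1) → b g k = 0)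
    (hb1 : b 1 0 = 1)
    (hrec : ∀ g : ℕ, 1 ≤ g → ∀ k : ℤ, 0 ≤ k → k ≤ (g : ℤ) →
      (4 * (g : ℚ) + 2 * (k : ℚ) + 6) * b (g + 1) k =
        (4 * (g : ℚ) + 2 * (k : ℚ) + 1) * (4 * (g : ℚ) + 2 * (k : ℚ) + 3) *
          ((4 * (g : ℚ) + 2 * (k : ℚ) + 2) * b g k
            + 4 * (4 * (g : ℚ) + 2 * (k : ℚ) - 1) * b g (k - 1))) :
    ∀ g : ℕ, 2 ≤ g →
      b g ((g : ℤ) - 2) / (((6 * g - 5)‼ : ℕ) : ℚ) =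
        (9 / 10) * (g : ℚ) * ((g : ℚ) - 1) * (b g ((g : ℤ) - 1) / (((6 * g - 3)‼ : ℕ) : ℚ)) ∧
      b g ((g : ℤ) - 2) =
        (1 / 5) * 2 ^ (g - 2) * (((6 * g - 5)‼ : ℕ) : ℚ) / (3 ^ (g - 2) * ((g - 2)! : ℚ)) := by
  intro g hg
  obtain ⟨m, rfl⟩ : ∃ m, g = m + 2 := ⟨g - 2, by omega⟩
  have hsub := renorm_subleading hb_supp hb1 hrec m
  have hlead : renorm b (m + 2) (m + 1) = 2 ^ (m + 1) / (3 ^ (m + 2) * (m + 2)!) :=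
    renorm_leading hb_supp hb1 hrec (m + 1)
  rw [show ((m + 2 : ℕ) : ℤ) - 2 = m by push_cast; ring,
    show ((m + 2 : ℕ) : ℤ) - 1 = (m + 1 : ℕ) by push_cast; ring,
    show 6 * (m + 2) - 5 = 4 * (m + 2) + 2 * m - 1 by omega,
    show 6 * (m + 2) - 3 = 4 * (m + 2) + 2 * (m + 1) - 1 by omega, Nat.add_sub_cancel]
  constructor
  · unfold renorm at hsub
    push_cast at hsub ⊢
    linear_combination hsub
  · rw [← div_mul_cancel₀ (b (m + 2) m) (Nat.cast_doubleFactorial_ne_zero _), ← renorm, hsub, hlead, Nat.factorial_succ (m + 1), Nat.factorial_succ m]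
    push_cast
    field_simp
    ring
end

section
/- Let b(g,k) be Harer–Zagier coefficients and let 𝔟(g,k) := b(g,k)/(4g+2k−1)!! be the renormalized coefficients. Then for every g ≥ 3: 𝔟(g,g−3) = (9/20)·(g−2)·(g − 13/21)·𝔟(g,g−2), equivalently b(g,g−3) = (21g−13)·2^{g−2}·(6g−7)!!/(700·3^{g−3}·(g−3)!). -/
/-!
For the renormalized coefficients `𝔟(g,k) = b(g,k) / (4g+2k-1)!!` the recurrence becomes
`(N+6) 𝔟(g+1,k) = (N+2) 𝔟(g,k) + 4 𝔟(g,k-1)` with `N = 4g+2k`. Along a diagonal `k = g - j`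
this is a first-order recurrence whose inhomogeneity is the diagonal above it, so the diagonals
`𝔟(g,g-1) = 2^(g-1) / (3^g g!)`, `𝔟(g,g-2) = 2^(g-1) / (10·3^(g-2) (g-2)!)` and
`𝔟(g,g-3) = (21g-13) 2^(g-2) / (700·3^(g-3) (g-3)!)` are found one after the other by induction,
starting from `b(1,0) = 1` and `b(g,-1) = 0`.
-/

open scoped Nat

namespace HarerZagier

/-- The renormalized coefficient `𝔟(g,k) = b(g,k) / (4g+2k-1)!!`; the truncation `toNat` only
matters outside the range `g ≥ 1`, `k ≥ 0`. -/
def normalized (b : ℕ → ℤ → ℚ) (g : ℕ) (k : ℤ) : ℚ :=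
  b g k / ((4 * (g : ℤ) + 2 * k - 1).toNat‼ : ℚ)

theorem div_doubleFactorial_eq_normalized (b : ℕ → ℤ → ℚ) {g : ℕ} {k : ℤ} {m : ℕ}
    (hm : (m : ℤ) = 4 * g + 2 * k - 1) : b g k / (m‼ : ℚ) = normalized b g k := by
  rw [normalized, ← hm, Int.toNat_natCast]

theorem normalized_eq_zero {b : ℕ → ℤ → ℚ} {g : ℕ} {k : ℤ} (h : b g k = 0) :
    normalized b g k = 0 := by
  rw [normalized, h, zero_div]

theorem normalized_step_of_recurrence (m : ℕ) {x y z : ℚ}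
    (h : (m + 9) * x = (m + 4) * (m + 6) * ((m + 5) * y + 4 * (m + 2) * z)) :
    (m + 9) * (x / ((m + 6)‼ : ℚ)) = (m + 5) * (y / ((m + 2)‼ : ℚ)) + 4 * (z / (m‼ : ℚ)) := by
  have h2 : ((m + 2)‼ : ℚ) = (m + 2) * m‼ := by
    rw [Nat.doubleFactorial_add_two]; push_cast; ring
  have h6 : ((m + 6)‼ : ℚ) = (m + 6) * (m + 4) * (m + 2) * m‼ := by
    rw [show m + 6 = m + 4 + 2 from rfl, Nat.doubleFactorial_add_two,
      Nat.doubleFactorial_add_two, Nat.doubleFactorial_add_two]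
    push_cast; ring
  have hm : (m‼ : ℚ) ≠ 0 := by positivity
  rw [h2, h6]
  field_simp
  linear_combination h

/-- With `N = 4g+2k`, the double factorials absorb the factors `(N+1)(N+3)` and `N-1`. -/
theorem Recurrence.normalized_succ {b : ℕ → ℤ → ℚ} (hrec : Recurrence b) {g : ℕ} (hg : 1 ≤ g)
    {k : ℤ} (hk : 0 ≤ k) (hkg : k ≤ g) :
    normalized b (g + 1) k =
      ((4 * (g : ℚ) + 2 * k + 2) * normalized b g k + 4 * normalized b g (k - 1)) /
        (4 * (g : ℚ) + 2 * k + 6) := by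
  obtain ⟨m, hm⟩ : ∃ m : ℕ, (m : ℤ) = 4 * g + 2 * k - 3 :=
    ⟨(4 * g + 2 * k - 3).toNat, Int.toNat_of_nonneg (by omega)⟩
  have hmQ : (4 * (g : ℚ) + 2 * k) = m + 3 := by
    have : (4 * (g : ℤ) + 2 * k) = m + 3 := by omega
    exact_mod_cast this
  rw [← div_doubleFactorial_eq_normalized b (m := m + 6) (by push_cast; omega),
    ← div_doubleFactorial_eq_normalized b (m := m + 2) (by push_cast; omega),
    ← div_doubleFactorial_eq_normalized b (m := m) (by omega), hmQ,
    eq_div_iff (by positivity)]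
  have h := hrec g hg k hk hkg
  rw [hmQ] at h
  convert normalized_step_of_recurrence m (x := b (g + 1) k) (y := b g k) (z := b g (k - 1))
    (by linear_combination h) using 1 <;> ring

section Diagonals

variable {b : ℕ → ℤ → ℚ}

theorem normalized_one_zero (hb1 : b 1 0 = 1) : normalized b 1 0 = 1 / 3 := by
  rw [← div_doubleFactorial_eq_normalized b (m := 3) (by norm_num), hb1]
  norm_num [Nat.doubleFactorial]

theorem normalized_succ_self (hrec : Recurrence b) (hb1 : b 1 0 = 1)
    (hdiag : ∀ g : ℕ, 1 ≤ g → b g g = 0) (n : ℕ) :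
    normalized b (n + 1) n = 2 ^ n / (3 ^ (n + 1) * ((n + 1)! : ℚ)) := by
  induction n with
  | zero => simpa using normalized_one_zero hb1
  | succ n ih =>
    rw [hrec.normalized_succ (by omega) (by positivity) le_rfl,
      normalized_eq_zero (by exact_mod_cast hdiag (n + 1) (by omega))]
    push_cast
    rw [add_sub_cancel_right, ih, Nat.factorial_succ (n + 1)]
    push_cast
    field_simp
    ring

theorem normalized_add_two_self (hrec : Recurrence b) (hb1 : b 1 0 = 1)
    (hdiag : ∀ g : ℕ, 1 ≤ g → b g g = 0) (hb1m : b 1 (-1) = 0) (n : ℕ) :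
    normalized b (n + 2) n = 2 ^ (n + 1) / (10 * 3 ^ n * (n ! : ℚ)) := by
  induction n with
  | zero =>
    have h := hrec.normalized_succ (g := 1) (k := 0) le_rfl le_rfl (by norm_num)
    rw [zero_sub, normalized_eq_zero hb1m, normalized_one_zero hb1] at h
    norm_num [h]
  | succ n ih =>
    have htop := normalized_succ_self hrec hb1 hdiag (n + 1)
    rw [hrec.normalized_succ (by omega) (by positivity) (by push_cast; omega)]
    push_cast at htop ⊢
    rw [add_sub_cancel_right, ih, show n + 2 = n + 1 + 1 from rfl, htop,
      Nat.factorial_succ (n + 1), Nat.factorial_succ n]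
    push_cast
    field_simp
    ring

theorem normalized_add_three_self (hrec : Recurrence b) (hb1 : b 1 0 = 1)
    (hdiag : ∀ g : ℕ, 1 ≤ g → b g g = 0) (hb1m : b 1 (-1) = 0) (hb2m : b 2 (-1) = 0) (n : ℕ) :
    normalized b (n + 3) n = (21 * n + 50) * 2 ^ (n + 1) / (700 * 3 ^ n * (n ! : ℚ)) := by
  induction n with
  | zero =>
    have h20 := normalized_add_two_self hrec hb1 hdiag hb1m 0
    norm_num at h20
    have h := hrec.normalized_succ (g := 2) (k := 0) one_le_two (by norm_num) (by norm_num)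
    rw [zero_sub, normalized_eq_zero hb2m, h20] at h
    norm_num [h]
  | succ n ih =>
    have hone := normalized_add_two_self hrec hb1 hdiag hb1m (n + 1)
    rw [hrec.normalized_succ (by omega) (by positivity) (by push_cast; omega)]
    push_cast at hone ⊢
    rw [add_sub_cancel_right, ih, show n + 3 = n + 1 + 2 from rfl, hone, Nat.factorial_succ n]
    push_cast
    field_simp
    ring

end Diagonals

end HarerZagier

open HarerZagier

theorem stmt6
    (b : ℕ → ℤ → ℚ)
    (hb_supp : ∀ g : ℕ, 1 ≤ g → ∀ k : ℤ, ¬ (0 ≤ k ∧ k ≤ (g : ℤ) - 1) → b g k = 0)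
    (hb1 : b 1 0 = 1)
    (hrec : ∀ g : ℕ, 1 ≤ g → ∀ k : ℤ, 0 ≤ k → k ≤ (g : ℤ) →
      (4 * (g : ℚ) + 2 * (k : ℚ) + 6) * b (g + 1) k =
        (4 * (g : ℚ) + 2 * (k : ℚ) + 1) * (4 * (g : ℚ) + 2 * (k : ℚ) + 3) *
          ((4 * (g : ℚ) + 2 * (k : ℚ) + 2) * b g k
            + 4 * (4 * (g : ℚ) + 2 * (k : ℚ) - 1) * b g (k - 1))) :
    ∀ g : ℕ, 3 ≤ g →
      b g ((g : ℤ) - 3) / (((6 * g - 7)‼ : ℕ) : ℚ) =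
        (9 / 20) * ((g : ℚ) - 2) * ((g : ℚ) - 13 / 21) *
          (b g ((g : ℤ) - 2) / (((6 * g - 5)‼ : ℕ) : ℚ)) ∧
      b g ((g : ℤ) - 3) =
        (21 * (g : ℚ) - 13) * 2 ^ (g - 2) * (((6 * g - 7)‼ : ℕ) : ℚ) /
          (700 * 3 ^ (g - 3) * ((g - 3)! : ℚ)) := by
  intro g hg
  obtain ⟨n, rfl⟩ : ∃ n, g = n + 3 := ⟨g - 3, by omega⟩
  have hdiag (g : ℕ) (hg : 1 ≤ g) : b g g = 0 := hb_supp g hg g (by omega)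
  have hdiag3 := normalized_add_three_self hrec hb1 hdiag (hb_supp 1 le_rfl _ (by omega))
    (hb_supp 2 one_le_two _ (by omega)) n
  have hdiag2 := normalized_add_two_self hrec hb1 hdiag (hb_supp 1 le_rfl _ (by omega)) (n + 1)
  have hb_eq : b (n + 3) n = normalized b (n + 3) n * ((6 * n + 11)‼ : ℚ) := by
    rw [← div_doubleFactorial_eq_normalized b (m := 6 * n + 11) (by push_cast; ring),
      div_mul_cancel₀ _ (by positivity)]
  rw [show ((n + 3 : ℕ) : ℤ) - 3 = n by push_cast; ring,
    show ((n + 3 : ℕ) : ℤ) - 2 = (n + 1 : ℕ) by push_cast; ring,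
    show 6 * (n + 3) - 7 = 6 * n + 11 by omega, show 6 * (n + 3) - 5 = 6 * n + 13 by omega,
    show n + 3 - 2 = n + 1 by omega, show n + 3 - 3 = n by omega,
    div_doubleFactorial_eq_normalized b (by push_cast; ring),
    div_doubleFactorial_eq_normalized b (by push_cast; ring), hb_eq, hdiag3, hdiag2,
    Nat.factorial_succ n]
  constructor <;> (push_cast; field_simp; ring)
end

section
/- Let b(g,k) be Harer–Zagier coefficients (so they are uniquely determined rational numbers). Then for every g ≥ 1 and every 0 ≤ k ≤ g−1, the number b(g,k) is a positive integer. -/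
/-!
Let `H = artanh x - x = ∑_{m odd, m ≥ 3} x^m / m`. From `(1 - x²) H' = x²` the coefficients of
the powers of `H` satisfy a recurrence that matches the one defining `b`, which gives
`b(g+1, k) · (k+1)! = (4g+2k+3)‼ · 2^k · [x^(2g+k+3)] H^(k+1)`.
Positivity is read off the recurrence for `b` directly. For integrality, the coefficients of
`H^j` are sums of products of reciprocals of odd numbers and `2^(v₂((k+1)!)) ≤ 2^k`, so `b` has
odd denominator. On the other hand `m! · [x^m] H^j / j!` is an integer (it counts permutations of
`m` points with `j` cycles, all of odd length at least 3), and `(4g+2k+3)‼ · 2^(2g+k+2)` equals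
`catalan (2g+k+2) · (2g+k+3)!`, so `4^(g+1) · b(g+1, k)` is an integer. Both together force
`b(g+1, k) ∈ ℤ`.
-/

open scoped Nat

open PowerSeries

noncomputable def artanhTail : ℚ⟦X⟧ :=
  mk fun m => if Odd m ∧ 3 ≤ m then (m : ℚ)⁻¹ else 0

lemma coeff_artanhTail (m : ℕ) :
    coeff m artanhTail = if Odd m ∧ 3 ≤ m then (m : ℚ)⁻¹ else 0 :=
  coeff_mk _ _

lemma coeff_derivative_artanhTail (m : ℕ) :
    coeff m (d⁄dX ℚ artanhTail) = if Odd (m + 1) ∧ 3 ≤ m + 1 then 1 else 0 := by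
  rw [coeff_derivative, coeff_artanhTail, ← Nat.cast_succ]
  split_ifs
  exacts [inv_mul_cancel₀ (by positivity), zero_mul _]

lemma one_sub_X_sq_mul_derivative_artanhTail :
    (1 - X ^ 2) * d⁄dX ℚ artanhTail = X ^ 2 := by
  ext n
  rw [sub_mul, one_mul, map_sub, coeff_X_pow_mul', coeff_X_pow]
  rcases n with _ | _ | _ | n
  · simp [coeff_derivative_artanhTail]
  · simp [coeff_derivative_artanhTail]
  · simp [coeff_derivative_artanhTail, show Odd 3 by decide]
  · by_cases hn : Odd n <;> simp [coeff_derivative_artanhTail, parity_simps, hn]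
    rw [if_pos (show 1 ≤ n from hn.pos), sub_self]

lemma one_sub_X_sq_mul_derivative_artanhTail_pow (j : ℕ) :
    (1 - X ^ 2) * d⁄dX ℚ (artanhTail ^ (j + 1)) =
      C ((j : ℚ) + 1) * (X ^ 2 * artanhTail ^ j) := by
  rw [Derivation.leibniz_pow, Nat.add_sub_cancel, smul_eq_mul, nsmul_eq_mul, Nat.cast_succ,
    map_add, map_one, map_natCast]
  linear_combination
    ((j + 1 : ℚ⟦X⟧) * artanhTail ^ j) * one_sub_X_sq_mul_derivative_artanhTail

lemma coeff_artanhTail_pow_succ_add_three (j m : ℕ) :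
    (m + 3 : ℚ) * coeff (m + 3) (artanhTail ^ (j + 1)) =
      (m + 1) * coeff (m + 1) (artanhTail ^ (j + 1)) + (j + 1) * coeff m (artanhTail ^ j) := by
  have h := congrArg (coeff (m + 2)) (one_sub_X_sq_mul_derivative_artanhTail_pow j)
  rw [sub_mul, one_mul, map_sub, coeff_X_pow_mul', if_pos le_add_self, Nat.add_sub_cancel,
    coeff_derivative, coeff_derivative, coeff_C_mul, coeff_X_pow_mul', if_pos le_add_self,
    Nat.add_sub_cancel] at h
  push_cast at h
  linear_combination h

lemma three_le_order_artanhTail : 3 ≤ artanhTail.order := by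
  exact_mod_cast nat_le_order _ 3 fun i hi => by rw [coeff_artanhTail, if_neg (by omega)]

lemma coeff_artanhTail_pow_of_lt {j m : ℕ} (h : m < 3 * j) : coeff m (artanhTail ^ j) = 0 := by
  refine coeff_of_lt_order _ ?_
  calc (m : ℕ∞) < j • (3 : ℕ∞) := by
        rw [nsmul_eq_mul]; exact_mod_cast (by omega : m < j * 3)
    _ ≤ j • artanhTail.order := nsmul_le_nsmul_right three_le_order_artanhTail j
    _ ≤ (artanhTail ^ j).order := le_order_pow _ _

lemma PowerSeries.coeff_pow_mem {R : Type*} [CommRing R] (S : Subring R) {f : R⟦X⟧}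
    (hf : ∀ n, coeff n f ∈ S) (j m : ℕ) : coeff m (f ^ j) ∈ S := by
  induction j generalizing m with
  | zero =>
    rw [pow_zero, coeff_one]
    split_ifs
    exacts [S.one_mem, S.zero_mem]
  | succ j ih =>
    rw [pow_succ, coeff_mul]
    exact S.sum_mem fun p _ => S.mul_mem (ih p.1) (hf p.2)

def oddDenSubring : Subring ℚ where
  carrier := {q | Odd q.den}
  mul_mem' ha hb := (Odd.mul ha hb).of_dvd_nat (Rat.mul_den_dvd _ _)
  one_mem' := odd_one
  add_mem' ha hb := (Odd.mul ha hb).of_dvd_nat (Rat.add_den_dvd _ _)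
  zero_mem' := odd_one
  neg_mem' ha := by rwa [Set.mem_ofPred_eq, Rat.neg_den]

lemma mem_oddDenSubring {q : ℚ} : q ∈ oddDenSubring ↔ Odd q.den := Iff.rfl

lemma inv_natCast_mem_oddDenSubring {n : ℕ} (hn : Odd n) : (n : ℚ)⁻¹ ∈ oddDenSubring := by
  rw [mem_oddDenSubring, Rat.inv_natCast_den, if_neg hn.pos.ne']
  exact hn

lemma coeff_artanhTail_pow_mem_oddDenSubring (j m : ℕ) :
    coeff m (artanhTail ^ j) ∈ oddDenSubring := by
  refine coeff_pow_mem _ (fun n => ?_) j m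
  rw [coeff_artanhTail]
  split_ifs with h
  exacts [inv_natCast_mem_oddDenSubring h.1, oddDenSubring.zero_mem]

lemma two_pow_div_factorial_succ_mem_oddDenSubring (k : ℕ) :
    (2 ^ k / (k + 1)! : ℚ) ∈ oddDenSubring := by
  obtain ⟨e, u, hu, hfac⟩ := Nat.exists_eq_two_pow_mul_odd (k + 1).factorial_ne_zero
  have hek : e ≤ k := by
    have : e ≤ padicValNat 2 (k + 1)! :=
      (padicValNat_dvd_iff_le (k + 1).factorial_ne_zero).mp (Dvd.intro u hfac.symm)
    have := padicValNat_factorial_lt_of_ne_zero 2 (n := k + 1) (by omega)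
    omega
  have : (2 ^ k / (k + 1)! : ℚ) = 2 ^ (k - e) * (u : ℚ)⁻¹ := by
    rw [hfac, ← pow_sub_mul_pow (2 : ℚ) hek]
    push_cast
    field_simp
  rw [this]
  exact oddDenSubring.mul_mem (oddDenSubring.pow_mem (ofNat_mem _ 2) _)
    (inv_natCast_mem_oddDenSubring hu)

lemma exists_intCast_eq_of_mem_oddDenSubring_of_mul_two_pow {q : ℚ} (hq : q ∈ oddDenSubring)
    {N : ℕ} {z : ℤ} (h : q * 2 ^ N = z) : ∃ n : ℤ, q = n := by
  have hq_eq : q = z * ((2 ^ N : ℕ) : ℚ)⁻¹ := by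
    rw [← h]
    push_cast
    field_simp
  have hdvd : q.den ∣ 2 ^ N := by
    rw [hq_eq]
    refine (Rat.mul_den_dvd _ _).trans ?_
    rw [Rat.den_intCast, one_mul, Rat.inv_natCast_den, if_neg (by positivity)]
  have hden := (Nat.Coprime.pow_right N (Nat.coprime_two_right.mpr hq)).eq_one_of_dvd hdvd
  exact ⟨q.num, (Rat.coe_int_num_of_den_eq_one hden).symm⟩

theorem exists_factorial_mul_coeff_artanhTail_pow :
    ∀ j m : ℕ, ∃ d : ℤ, (m ! : ℚ) * coeff m (artanhTail ^ j) = j ! * d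
  | 0, m => ⟨if m = 0 then 1 else 0, by rw [pow_zero, coeff_one]; split_ifs <;> simp_all⟩
  | j + 1, m + 3 => by
    obtain ⟨d₁, hd₁⟩ := exists_factorial_mul_coeff_artanhTail_pow (j + 1) (m + 1)
    obtain ⟨d₀, hd₀⟩ := exists_factorial_mul_coeff_artanhTail_pow j m
    refine ⟨(m + 2) * (m + 1) * (d₁ + d₀), ?_⟩
    have hrec := coeff_artanhTail_pow_succ_add_three j m
    simp only [Nat.factorial_succ] at hd₁ ⊢
    push_cast at hd₁ hd₀ ⊢
    linear_combination ((m + 2) * (m + 1) * m ! : ℚ) * hrec + ((m + 2) * (m + 1) : ℚ) * hd₁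
      + ((j + 1) * (m + 2) * (m + 1) : ℚ) * hd₀
  | j + 1, 0 | j + 1, 1 | j + 1, 2 =>
    ⟨0, by rw [coeff_artanhTail_pow_of_lt (by omega), mul_zero, Int.cast_zero, mul_zero]⟩

lemma catalan_mul_factorial_mul_factorial_succ (n : ℕ) :
    catalan n * n ! * (n + 1)! = (2 * n)! := by
  rw [Nat.factorial_succ, two_mul, ← Nat.add_choose_mul_factorial_mul_factorial, ← two_mul,
    ← Nat.centralBinom_eq_two_mul_choose, ← succ_mul_catalan_eq_centralBinom]
  ring

lemma catalan_succ_mul_factorial (n : ℕ) :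
    catalan (n + 1) * (n + 2)! = 2 ^ (n + 1) * (2 * n + 1)‼ := by
  have h := catalan_mul_factorial_mul_factorial_succ (n + 1)
  rw [show 2 * (n + 1) = 2 * n + 1 + 1 by ring, Nat.factorial_eq_mul_doubleFactorial (2 * n + 1),
    show 2 * n + 1 + 1 = 2 * (n + 1) by ring, Nat.doubleFactorial_two_mul] at h
  refine Nat.eq_of_mul_eq_mul_left (n + 1).factorial_pos ?_
  linear_combination h

structure IsHarerZagier (b : ℕ → ℤ → ℚ) : Prop where
  eq_zero : ∀ g : ℕ, 1 ≤ g → ∀ k : ℤ, ¬ (0 ≤ k ∧ k ≤ (g : ℤ) - 1) → b g k = 0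
  apply_one_zero : b 1 0 = 1
  recurrence : ∀ g : ℕ, 1 ≤ g → ∀ k : ℤ, 0 ≤ k → k ≤ (g : ℤ) →
    (4 * (g : ℚ) + 2 * (k : ℚ) + 6) * b (g + 1) k =
      (4 * (g : ℚ) + 2 * (k : ℚ) + 1) * (4 * (g : ℚ) + 2 * (k : ℚ) + 3) *
        ((4 * (g : ℚ) + 2 * (k : ℚ) + 2) * b g k
          + 4 * (4 * (g : ℚ) + 2 * (k : ℚ) - 1) * b g (k - 1))

namespace IsHarerZagier

variable {b : ℕ → ℤ → ℚ} (hb : IsHarerZagier b)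
include hb

lemma eq_zero_of_lt_or_lt {g : ℕ} {k : ℤ} (hk : k < 0 ∨ g < k) : b (g + 1) k = 0 :=
  hb.eq_zero (g + 1) (by omega) k (by push_cast; omega)

lemma recurrence_succ (g k : ℕ) (hk : k ≤ g + 1) :
    (4 * (g : ℚ) + 2 * k + 10) * b (g + 2) k =
      (4 * (g : ℚ) + 2 * k + 5) * (4 * (g : ℚ) + 2 * k + 7) *
        ((4 * (g : ℚ) + 2 * k + 6) * b (g + 1) k
          + 4 * (4 * (g : ℚ) + 2 * k + 3) * b (g + 1) (k - 1)) := by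
  have h := hb.recurrence (g + 1) (by omega) k (by positivity) (by exact_mod_cast hk)
  push_cast at h
  linear_combination h

theorem apply_pos : ∀ g k : ℕ, k ≤ g → 0 < b (g + 1) k
  | 0, k, hk => by rw [Nat.le_zero.mp hk, Nat.cast_zero, hb.apply_one_zero]; exact one_pos
  | g + 1, k, hk => by
    have ih := apply_pos g
    have nonneg (k : ℤ) : 0 ≤ b (g + 1) k := by
      by_cases hk : 0 ≤ k ∧ k ≤ g
      · lift k to ℕ using hk.1
        exact (ih k (by exact_mod_cast hk.2)).le
      · rw [hb.eq_zero_of_lt_or_lt (by omega)]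
    have hsum : 0 < (4 * (g : ℚ) + 2 * k + 6) * b (g + 1) k
        + 4 * (4 * (g : ℚ) + 2 * k + 3) * b (g + 1) (k - 1) := by
      rcases Nat.lt_or_ge g k with hgk | hkg
      · have hk' : ((k : ℤ) - 1) = (g : ℕ) := by omega
        rw [hk']
        exact add_pos_of_nonneg_of_pos (mul_nonneg (by positivity) (nonneg _))
          (mul_pos (by positivity) (ih g le_rfl))
      · exact add_pos_of_pos_of_nonneg (mul_pos (by positivity) (ih k hkg))
          (mul_nonneg (by positivity) (nonneg _))
    refine pos_of_mul_pos_right (a := 4 * (g : ℚ) + 2 * k + 10) ?_ (by positivity)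
    rw [hb.recurrence_succ g k hk]
    positivity

-- Indexed by `j = k + 1` so that the case `j = 0`, where both sides vanish, needs no separate
-- treatment in the induction step.
theorem factorial_mul_apply_sub_one_mul_two :
    ∀ g j : ℕ, (j ! : ℚ) * b (g + 1) ((j : ℤ) - 1) * 2 =
      ((4 * g + 2 * j + 1)‼ : ℕ) * 2 ^ j * coeff (2 * g + j + 2) (artanhTail ^ j)
  | 0, 0 => by simp [hb.eq_zero_of_lt_or_lt]
  | 0, 1 => by
    norm_num [hb.apply_one_zero, coeff_artanhTail]
  | 0, j + 2 => by
    rw [hb.eq_zero_of_lt_or_lt (by omega), coeff_artanhTail_pow_of_lt (by omega)]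
    simp
  | g + 1, 0 => by simp [hb.eq_zero_of_lt_or_lt]
  | g + 1, k + 1 => by
    rcases Nat.lt_or_ge (g + 1) k with hgk | hkg
    · rw [hb.eq_zero_of_lt_or_lt (by omega), coeff_artanhTail_pow_of_lt (by omega)]
      simp
    have ih₁ := factorial_mul_apply_sub_one_mul_two g (k + 1)
    have ih₀ := factorial_mul_apply_sub_one_mul_two g k
    have hrec := hb.recurrence_succ g k hkg
    have hcoeff := coeff_artanhTail_pow_succ_add_three k (2 * g + k + 2)
    have hD : (4 * g + 2 * k + 3)‼ = (4 * g + 2 * k + 3) * (4 * g + 2 * k + 1)‼ :=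
      Nat.doubleFactorial_add_two _
    rw [show 4 * (g + 1) + 2 * (k + 1) + 1 = 4 * g + 2 * k + 3 + 2 + 2 by ring,
      Nat.doubleFactorial_add_two, Nat.doubleFactorial_add_two, hD,
      show 2 * (g + 1) + (k + 1) + 2 = 2 * g + k + 2 + 3 by ring]
    rw [show 4 * g + 2 * (k + 1) + 1 = 4 * g + 2 * k + 3 by ring, hD,
      show 2 * g + (k + 1) + 2 = 2 * g + k + 2 + 1 by ring] at ih₁
    simp only [Nat.factorial_succ, Nat.cast_add_one, add_sub_cancel_right] at ih₁ ⊢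
    refine mul_left_cancel₀ (show (4 * g + 2 * k + 10 : ℚ) ≠ 0 by positivity) ?_
    push_cast at *
    linear_combination (2 * (k + 1) * k ! : ℚ) * hrec
      + ((4 * g + 2 * k + 5) * (4 * g + 2 * k + 7) * (4 * g + 2 * k + 6) : ℚ) * ih₁
      + (4 * (4 * g + 2 * k + 3) * (4 * g + 2 * k + 5) * (4 * g + 2 * k + 7) * (k + 1) : ℚ)
          * ih₀
      - (2 * (4 * g + 2 * k + 3) * (4 * g + 2 * k + 5) * (4 * g + 2 * k + 7)
          * (4 * g + 2 * k + 1)‼ * 2 ^ (k + 1) : ℚ) * hcoeff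

lemma apply_mul_factorial_succ (g k : ℕ) :
    b (g + 1) k * (k + 1)! =
      (4 * g + 2 * k + 3)‼ * 2 ^ k * coeff (2 * g + k + 3) (artanhTail ^ (k + 1)) := by
  have h := hb.factorial_mul_apply_sub_one_mul_two g (k + 1)
  rw [show 4 * g + 2 * (k + 1) + 1 = 4 * g + 2 * k + 3 by ring,
    show 2 * g + (k + 1) + 2 = 2 * g + k + 3 by ring] at h
  simp only [Nat.cast_add_one, add_sub_cancel_right] at h
  linear_combination h / 2

lemma apply_mem_oddDenSubring (g k : ℕ) : b (g + 1) k ∈ oddDenSubring := by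
  have hb_eq : b (g + 1) k = (4 * g + 2 * k + 3)‼ * (2 ^ k / (k + 1)! : ℚ)
      * coeff (2 * g + k + 3) (artanhTail ^ (k + 1)) := by
    field_simp
    exact hb.apply_mul_factorial_succ g k
  rw [hb_eq]
  exact mul_mem (mul_mem (natCast_mem _ _) (two_pow_div_factorial_succ_mem_oddDenSubring k))
    (coeff_artanhTail_pow_mem_oddDenSubring _ _)

lemma exists_mul_two_pow_eq_intCast (g k : ℕ) :
    ∃ z : ℤ, b (g + 1) k * 2 ^ (2 * g + 2) = z := by
  obtain ⟨d, hd⟩ := exists_factorial_mul_coeff_artanhTail_pow (k + 1) (2 * g + k + 3)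
  have h := hb.apply_mul_factorial_succ g k
  have hcat : (catalan (2 * g + k + 2) * (2 * g + k + 3)! : ℚ) =
      2 ^ (2 * g + k + 2) * (4 * g + 2 * k + 3)‼ := by
    have := catalan_succ_mul_factorial (2 * g + k + 1)
    rw [show 2 * (2 * g + k + 1) + 1 = 4 * g + 2 * k + 3 by ring] at this
    exact_mod_cast this
  refine ⟨catalan (2 * g + k + 2) * d, ?_⟩
  refine mul_right_cancel₀ (show ((k + 1)! * (2 * g + k + 3)! : ℚ) ≠ 0 by positivity) ?_
  push_cast
  linear_combination (2 ^ (2 * g + 2) * (2 * g + k + 3)! : ℚ) * h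
    + (2 ^ (2 * g + 2) * (4 * g + 2 * k + 3)‼ * 2 ^ k : ℚ) * hd
    - (d * (k + 1)! : ℚ) * hcat

end IsHarerZagier

theorem stmt7
    (b : ℕ → ℤ → ℚ)
    (hb_supp : ∀ g : ℕ, 1 ≤ g → ∀ k : ℤ, ¬ (0 ≤ k ∧ k ≤ (g : ℤ) - 1) → b g k = 0)
    (hb1 : b 1 0 = 1)
    (hrec : ∀ g : ℕ, 1 ≤ g → ∀ k : ℤ, 0 ≤ k → k ≤ (g : ℤ) →
      (4 * (g : ℚ) + 2 * (k : ℚ) + 6) * b (g + 1) k =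
        (4 * (g : ℚ) + 2 * (k : ℚ) + 1) * (4 * (g : ℚ) + 2 * (k : ℚ) + 3) *
          ((4 * (g : ℚ) + 2 * (k : ℚ) + 2) * b g k
            + 4 * (4 * (g : ℚ) + 2 * (k : ℚ) - 1) * b g (k - 1))) :
    ∀ g : ℕ, 1 ≤ g → ∀ k : ℤ, 0 ≤ k → k ≤ (g : ℤ) - 1 →
      ∃ n : ℕ, 0 < n ∧ b g k = (n : ℚ) := by
  intro g hg k hk₀ hk₁
  have hb : IsHarerZagier b := ⟨hb_supp, hb1, hrec⟩
  obtain ⟨g, rfl⟩ : ∃ g', g = g' + 1 := ⟨g - 1, by omega⟩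
  lift k to ℕ using hk₀
  obtain ⟨z, hz⟩ := hb.exists_mul_two_pow_eq_intCast g k
  obtain ⟨n, hn⟩ :=
    exists_intCast_eq_of_mem_oddDenSubring_of_mul_two_pow (hb.apply_mem_oddDenSubring g k) hz
  have hpos := hb.apply_pos g k (by omega)
  rw [hn, Int.cast_pos] at hpos
  lift n to ℕ using hpos.le
  exact ⟨n, by exact_mod_cast hpos, by rw [hn, Int.cast_natCast]⟩
end

section
/- Define functions g_n on ℝ∖{0} recursively by g_0(λ) = 2/s(λ)² and g_n(λ) = g_{n−1}″(λ) − (2n)²·g_{n−1}(λ) for n ≥ 1. Then for every n ≥ 0 and every λ ≠ 0: g_n(λ) = 2^{2n+1}·(2n+1)!·s(λ)^{−(2n+2)}. -/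
/-!
Since `sh' = 2 cosh`, `(2 cosh)' = sh` and `(2 cosh)² = sh² + 4`, every power of `sh` satisfies
`(d²/dλ² − m²) sh^m = 4 m (m − 1) sh^(m−2)`. For `m = −(2n+2)` the factor `4 m (m − 1)` is
`4 (2n+2)(2n+3)`, exactly the ratio of consecutive constants `2^(2n+1) (2n+1)!`, so the claim
follows by induction on `n`.
-/

open scoped Nat

open Filter Topology Real

lemma sh_eq_two_mul_sinh_s12 (l : ℝ) : sh l = 2 * sinh l := by
  rw [sh, sinh_eq]; ring

lemma sh_ne_zero {l : ℝ} (hl : l ≠ 0) : sh l ≠ 0 := by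
  simpa [sh_eq_two_mul_sinh_s12] using hl

lemma two_mul_cosh_sq (l : ℝ) : (2 * cosh l) ^ 2 = sh l ^ 2 + 4 := by
  rw [sh_eq_two_mul_sinh_s12, mul_pow, mul_pow, cosh_sq]; ring

lemma hasDerivAt_sh_s12 (l : ℝ) : HasDerivAt sh (2 * cosh l) l := by
  simpa only [funext sh_eq_two_mul_sinh_s12] using (hasDerivAt_sinh l).const_mul 2

lemma hasDerivAt_two_mul_cosh (l : ℝ) : HasDerivAt (fun x => 2 * cosh x) (sh l) l := by
  simpa only [sh_eq_two_mul_sinh_s12] using (hasDerivAt_cosh l).const_mul 2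

lemma hasDerivAt_sh_zpow (m : ℤ) {l : ℝ} (hl : l ≠ 0) :
    HasDerivAt (fun x => sh x ^ m) (m * sh l ^ (m - 1) * (2 * cosh l)) l :=
  (hasDerivAt_zpow m (sh l) (Or.inl (sh_ne_zero hl))).comp l (hasDerivAt_sh_s12 l)

lemma deriv_deriv_sh_zpow_sub (m : ℤ) {l : ℝ} (hl : l ≠ 0) :
    deriv (deriv fun x => sh x ^ m) l - (m : ℝ) ^ 2 * sh l ^ m
      = 4 * m * (m - 1) * sh l ^ (m - 2) := by
  have hderiv : deriv (fun x => sh x ^ m) =ᶠ[𝓝 l] fun x => m * sh x ^ (m - 1) * (2 * cosh x) := by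
    filter_upwards [isOpen_ne.mem_nhds hl] with x hx
    exact (hasDerivAt_sh_zpow m hx).deriv
  have hderiv2 : HasDerivAt (fun x => m * sh x ^ (m - 1) * (2 * cosh x)) _ l :=
    ((hasDerivAt_sh_zpow (m - 1) hl).const_mul (m : ℝ)).mul (hasDerivAt_two_mul_cosh l)
  rw [hderiv.deriv_eq, hderiv2.deriv]
  have hs := sh_ne_zero hl
  have hpred : sh l ^ (m - 1) = sh l ^ (m - 2) * sh l := by
    rw [← zpow_add_one₀ hs]; ring_nf
  have hself : sh l ^ m = sh l ^ (m - 2) * sh l ^ 2 := by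
    rw [← zpow_natCast, ← zpow_add₀ hs]; ring_nf
  rw [show m - 1 - 1 = m - 2 by ring, hpred, hself]
  push_cast
  linear_combination (m * (m - 1) * sh l ^ (m - 2) : ℝ) * two_mul_cosh_sq l

theorem stmt12
    (g : ℕ → ℝ → ℝ)
    (h0 : ∀ l : ℝ, g 0 l = 2 / (sh l) ^ 2)
    (hrec : ∀ n : ℕ, ∀ l : ℝ,
      g (n + 1) l = deriv (deriv (g n)) l - (2 * ((n : ℝ) + 1)) ^ 2 * g n l) :
    ∀ n : ℕ, ∀ l : ℝ, l ≠ 0 →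
      g n l = 2 ^ (2 * n + 1) * ((2 * n + 1)! : ℝ) * (sh l) ^ (-(2 * (n : ℤ) + 2)) := by
  intro n
  induction n with
  | zero =>
    intro l _
    simp [h0, zpow_neg, div_eq_mul_inv]
  | succ n ih =>
    intro l hl
    set c : ℝ := 2 ^ (2 * n + 1) * ((2 * n + 1)! : ℝ)
    have hg : g n =ᶠ[𝓝 l] fun x => c * sh x ^ (-(2 * (n : ℤ) + 2)) := by
      filter_upwards [isOpen_ne.mem_nhds hl] with x hx
      exact ih x hx
    have key := deriv_deriv_sh_zpow_sub (-(2 * (n : ℤ) + 2)) hl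
    rw [hrec, hg.deriv.deriv_eq, deriv_const_mul_field', deriv_const_mul_field', ih l hl]
    have hfact : ((2 * (n + 1) + 1)! : ℝ) = (2 * n + 3) * (2 * n + 2) * (2 * n + 1)! := by
      rw [show 2 * (n + 1) + 1 = 2 * n + 1 + 1 + 1 by ring, Nat.factorial_succ, Nat.factorial_succ]
      push_cast; ring
    rw [hfact, show -(2 * ((n + 1 : ℕ) : ℤ) + 2) = -(2 * (n : ℤ) + 2) - 2 by push_cast; ring]
    push_cast at key ⊢
    linear_combination c * key
end

section
/- Let ℏ > 1 be real. For every real x the integral F(x) = ∫_0^∞ t^{−1/ℏ}·exp(−(t²/2 + x·t)/ℏ) dt converges; F is twice differentiable on ℝ and satisfies the second-order linear differential equation ℏ²·F″(x) − ℏ·x·F′(x) + (1 − ℏ)·F(x) = 0 for all x ∈ ℝ. -/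
/-!
Write `F = M (-1/ℏ)` with the moments `M q x = ∫₀^∞ t^q e^{-(t²/2 + x t)/ℏ} dt`, which
converge for `q > -1` since the weight is dominated by a Gaussian. Differentiating under the
integral sign gives `ℏ ∂ₓ M q = -M (q + 1)`, and integrating the exact derivative of
`t^{q+1} e^{-(t²/2 + x t)/ℏ}` over `(0, ∞)` gives `M (q + 2) + x M (q + 1) = ℏ (q + 1) M q`.
For `q = -1/ℏ` the right-hand side is `(ℏ - 1) F`, which is the differential equation.
-/

open MeasureTheory

open Real Set Filter

noncomputable def gaussWeight (h q x t : ℝ) : ℝ := t ^ q * exp (-(t ^ 2 / 2 + x * t) / h)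

noncomputable def gaussMoment (h q x : ℝ) : ℝ := ∫ t in Ioi 0, gaussWeight h q x t

variable {h q x t : ℝ}

lemma gaussWeight_nonneg (ht : 0 ≤ t) : 0 ≤ gaussWeight h q x t := by
  unfold gaussWeight; positivity

lemma gaussWeight_add_one (ht : 0 < t) : gaussWeight h (q + 1) x t = t * gaussWeight h q x t := by
  rw [gaussWeight, gaussWeight, rpow_add_one ht.ne']
  ring

lemma continuousOn_gaussWeight : ContinuousOn (gaussWeight h q x) (Ioi 0) := by
  refine ContinuousOn.mul (fun t ht => ?_) (by fun_prop)
  exact (continuousAt_rpow_const t q (Or.inl (ne_of_gt ht))).continuousWithinAt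

/-- Completing the square: `t²/4 + x t + x² = (t/2 + x)² ≥ 0`. -/
lemma exp_le_exp_mul_gaussian (hh : 0 < h) (x t : ℝ) :
    exp (-(t ^ 2 / 2 + x * t) / h) ≤ exp (x ^ 2 / h) * exp (-(1 / (4 * h)) * t ^ 2) := by
  rw [← exp_add, exp_le_exp, ← sub_nonneg]
  have : x ^ 2 / h + -(1 / (4 * h)) * t ^ 2 - -(t ^ 2 / 2 + x * t) / h = (t / 2 + x) ^ 2 / h := by
    field_simp
    ring
  rw [this]
  positivity

lemma integrableOn_gaussWeight (hh : 0 < h) (hq : -1 < q) (x : ℝ) :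
    IntegrableOn (gaussWeight h q x) (Ioi 0) := by
  refine Integrable.mono'
    ((integrableOn_rpow_mul_exp_neg_mul_sq (by positivity : 0 < 1 / (4 * h)) hq).const_mul
      (exp (x ^ 2 / h)))
    (continuousOn_gaussWeight.aestronglyMeasurable measurableSet_Ioi) ?_
  rw [ae_restrict_iff' measurableSet_Ioi]
  refine .of_forall fun t (ht : 0 < t) => ?_
  rw [norm_of_nonneg (gaussWeight_nonneg ht.le), gaussWeight, mul_left_comm]
  exact mul_le_mul_of_nonneg_left (exp_le_exp_mul_gaussian hh x t) (rpow_nonneg ht.le q)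

lemma gaussWeight_le_of_le (hh : 0 < h) (ht : 0 ≤ t) {y : ℝ} (hyx : y ≤ x) :
    gaussWeight h q x t ≤ gaussWeight h q y t := by
  unfold gaussWeight
  gcongr

lemma hasDerivAt_gaussWeight_param (h q t x : ℝ) :
    HasDerivAt (fun x => gaussWeight h q x t) (-(t / h) * gaussWeight h q x t) x := by
  have hexp : HasDerivAt (fun x => -(t ^ 2 / 2 + x * t) / h) (-(t / h)) x :=
    ((((hasDerivAt_id x).mul_const t).const_add (t ^ 2 / 2)).neg.div_const h).congr_deriv
      (by simp [neg_div])
  exact (hexp.exp.const_mul (t ^ q)).congr_deriv (by rw [gaussWeight]; ring)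

lemma hasDerivAt_gaussMoment (hh : 0 < h) (hq : -1 < q) (x₀ : ℝ) :
    HasDerivAt (gaussMoment h q) (-gaussMoment h (q + 1) x₀ / h) x₀ := by
  have key := hasDerivAt_integral_of_dominated_loc_of_deriv_le
    (μ := volume.restrict (Ioi 0)) (F := fun x t => gaussWeight h q x t)
    (F' := fun x t => -gaussWeight h (q + 1) x t / h) (x₀ := x₀)
    (bound := fun t => gaussWeight h (q + 1) (x₀ - 1) t / h)
    (Ioi_mem_nhds (sub_one_lt x₀))
    (.of_forall fun x => continuousOn_gaussWeight.aestronglyMeasurable measurableSet_Ioi)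
    (integrableOn_gaussWeight hh hq x₀)
    ((continuousOn_gaussWeight.neg.div_const h).aestronglyMeasurable measurableSet_Ioi)
    ?bound ((integrableOn_gaussWeight hh (by linarith) (x₀ - 1)).div_const h) ?deriv
  · exact key.2.congr_deriv (by rw [integral_div, integral_neg, gaussMoment])
  case bound =>
    rw [ae_restrict_iff' measurableSet_Ioi]
    refine .of_forall fun t (ht : 0 < t) x (hx : x₀ - 1 < x) => ?_
    rw [norm_div, norm_neg, norm_of_nonneg (gaussWeight_nonneg ht.le), norm_of_nonneg hh.le]
    gcongr
    exact gaussWeight_le_of_le hh ht.le hx.le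
  case deriv =>
    rw [ae_restrict_iff' measurableSet_Ioi]
    refine .of_forall fun t (ht : 0 < t) x _ => ?_
    exact (hasDerivAt_gaussWeight_param h q t x).congr_deriv
      (by rw [gaussWeight_add_one ht]; ring)

lemma hasDerivAt_gaussWeight (ht : 0 < t) :
    HasDerivAt (gaussWeight h (q + 1) x)
      ((q + 1) * gaussWeight h q x t -
        (gaussWeight h (q + 2) x t + x * gaussWeight h (q + 1) x t) / h) t := by
  have hpow := hasDerivAt_rpow_const (x := t) (p := q + 1) (Or.inl ht.ne')
  have hexp : HasDerivAt (fun t => -(t ^ 2 / 2 + x * t) / h) (-(t + x) / h) t :=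
    ((((hasDerivAt_pow 2 t).div_const 2).add
      ((hasDerivAt_id t).const_mul x)).neg.div_const h).congr_deriv (by simp)
  refine (hpow.mul hexp.exp).congr_deriv ?_
  rw [show q + 2 = q + 1 + 1 by ring, gaussWeight_add_one ht, gaussWeight_add_one ht,
    add_sub_cancel_right, gaussWeight, rpow_add_one ht.ne']
  ring

lemma gaussMoment_recurrence (hh : 0 < h) (hq : -1 < q) (x : ℝ) :
    gaussMoment h (q + 2) x + x * gaussMoment h (q + 1) x = h * (q + 1) * gaussMoment h q x := by
  have i0 := integrableOn_gaussWeight hh hq x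
  have i1 := integrableOn_gaussWeight hh (q := q + 1) (by linarith) x
  have i2 := integrableOn_gaussWeight hh (q := q + 2) (by linarith) x
  have hderiv : ∀ t ∈ Ioi (0 : ℝ), HasDerivAt (gaussWeight h (q + 1) x) _ t :=
    fun t ht => hasDerivAt_gaussWeight ht
  have i21 : IntegrableOn (fun t => gaussWeight h (q + 2) x t + x * gaussWeight h (q + 1) x t)
      (Ioi 0) := i2.add (i1.const_mul x)
  have i' := (i0.const_mul (q + 1)).sub (i21.div_const h)
  have hzero : gaussWeight h (q + 1) x 0 = 0 := by
    rw [gaussWeight, zero_rpow (by linarith), zero_mul]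
  have hcont : ContinuousWithinAt (gaussWeight h (q + 1) x) (Ici 0) 0 :=
    ((continuousAt_rpow_const 0 (q + 1) (Or.inr (by linarith))).mul
      (by fun_prop)).continuousWithinAt
  have hFTC := integral_Ioi_of_hasDerivAt_of_tendsto hcont hderiv i'
    (tendsto_zero_of_hasDerivAt_of_integrableOn_Ioi hderiv i' i1)
  rw [hzero, sub_zero, integral_sub (i0.const_mul _) (i21.div_const h),
    integral_div, integral_add i2 (i1.const_mul x), integral_const_mul, integral_const_mul] at hFTC
  simp only [gaussMoment]
  field_simp at hFTC
  linear_combination -hFTC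

theorem stmt17 (h : ℝ) (hh : 1 < h) (F : ℝ → ℝ)
    (hF : ∀ x : ℝ, F x =
      ∫ t in Set.Ioi (0 : ℝ), Real.rpow t (-1 / h) * Real.exp (-(t ^ 2 / 2 + x * t) / h)) :
    (∀ x : ℝ, IntegrableOn
      (fun t : ℝ => Real.rpow t (-1 / h) * Real.exp (-(t ^ 2 / 2 + x * t) / h))
      (Set.Ioi (0 : ℝ))) ∧
    (∀ x : ℝ, DifferentiableAt ℝ F x ∧ DifferentiableAt ℝ (deriv F) x) ∧
    (∀ x : ℝ, h ^ 2 * deriv (deriv F) x - h * x * deriv F x + (1 - h) * F x = 0) := by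
  have h0 : 0 < h := by linarith
  have hq : -1 < -1 / h := by
    rw [neg_div, neg_lt_neg_iff]
    exact (div_lt_one h0).2 hh
  obtain rfl : F = gaussMoment h (-1 / h) := funext hF
  have hF' : deriv (gaussMoment h (-1 / h)) = fun x => -gaussMoment h (-1 / h + 1) x / h :=
    funext fun x => (hasDerivAt_gaussMoment h0 hq x).deriv
  have hF'' (x : ℝ) : HasDerivAt (deriv (gaussMoment h (-1 / h)))
      (-(-gaussMoment h (-1 / h + 2) x / h) / h) x := by
    rw [hF', show -1 / h + 2 = -1 / h + 1 + 1 by ring]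
    exact (hasDerivAt_gaussMoment h0 (by linarith) x).neg.div_const h
  refine ⟨integrableOn_gaussWeight h0 hq,
    fun x => ⟨(hasDerivAt_gaussMoment h0 hq x).differentiableAt, (hF'' x).differentiableAt⟩,
    fun x => ?_⟩
  rw [(hF'' x).deriv, hF']
  have hrec := gaussMoment_recurrence h0 hq x
  field_simp at hrec ⊢
  linear_combination hrec
end

section
/- For every integer s ≥ 0 there exists a unique sequence of polynomials P_k ∈ ℚ[X] (k ≥ 0) such that P_0 = 1, deg P_k ≤ k for every k, and for every k ≥ 1 the polynomial identity (3X + 3 − k − s)·P_k(X+1) = (3X + 1 − k − s)·P_{k−1}(X) + (3X − 3k + 3 − s)·P_k(X) holds in ℚ[X]. Moreover P_1(X) = (3X − s − 3)/5. -/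
open Polynomial

namespace Stmt19Aux

/-- The linear operator `Q ↦ (3X + c₁) Q(X+1) - (3X + c₂) Q(X)`. -/
noncomputable def T (c1 c2 : ℚ) : Polynomial ℚ →ₗ[ℚ] Polynomial ℚ where
  toFun Q := (3 * X + C c1) * Q.comp (X + 1) - (3 * X + C c2) * Q
  map_add' Q R := by simp only [add_comp]; ring
  map_smul' a Q := by
    simp only [smul_comp]
    simp only [smul_eq_C_mul, RingHom.id_apply]; ring

lemma T_apply (c1 c2 : ℚ) (Q : Polynomial ℚ) :
    T c1 c2 Q = (3 * X + C c1) * Q.comp (X + 1) - (3 * X + C c2) * Q := rfl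

lemma T_inj (s k : ℕ) (hk : 1 ≤ k) :
    Function.Injective (T (3 - (k:ℚ) - s) (3 - 3*(k:ℚ) - s)) := by
  rw [← LinearMap.ker_eq_bot, LinearMap.ker_eq_bot']
  intro Q hQ
  rw [T_apply, sub_eq_zero] at hQ
  set x0 : ℚ := ((3*(k:ℚ) + s - 3)) / 3 with hx0
  have heval : ∀ t : ℚ, (3*t + (3 - (k:ℚ) - s)) * Q.eval (t+1)
      = (3*t + (3 - 3*(k:ℚ) - s)) * Q.eval t := by
    intro t
    have := congrArg (Polynomial.eval t) hQ
    simpa [eval_comp] using this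
  have key : ∀ j : ℕ, Q.eval (x0 + 1 + j) = 0 := by
    intro j
    induction j with
    | zero =>
      have h := heval x0
      have h0 : 3*x0 + (3 - 3*(k:ℚ) - s) = 0 := by field_simp [hx0]; ring
      have h1 : 3*x0 + (3 - (k:ℚ) - s) = 2*k := by field_simp [hx0]; ring
      rw [h0, zero_mul, h1] at h
      have hk' : (2*(k:ℚ)) ≠ 0 := by positivity
      simpa using mul_eq_zero.mp h |>.resolve_left hk'
    | succ j ih =>
      have h := heval (x0 + 1 + j)
      rw [ih, mul_zero] at h
      have h1 : 3*(x0 + 1 + (j:ℚ)) + (3 - (k:ℚ) - s) = 2*k + 3 + 3*j := by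
        field_simp [hx0]; ring
      rw [h1] at h
      have hk' : (2*(k:ℚ) + 3 + 3*j) ≠ 0 := by positivity
      have := mul_eq_zero.mp h |>.resolve_left hk'
      have harg : x0 + 1 + ((j:ℚ) + 1) = x0 + 1 + (j:ℚ) + 1 := by ring
      rw [Nat.cast_succ, harg]
      exact this
  apply Polynomial.eq_zero_of_infinite_isRoot
  refine Set.infinite_of_injective_forall_mem
    (f := fun j : ℕ => x0 + 1 + (j:ℚ)) ?_ (fun j => key j)
  intro a b hab
  have : (a:ℚ) = b := by simpa using hab
  exact_mod_cast this

lemma T_natDegree_le (c1 c2 : ℚ) (Q : Polynomial ℚ) :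
    (T c1 c2 Q).natDegree ≤ Q.natDegree := by
  rcases eq_or_ne Q.natDegree 0 with h0 | h0
  · obtain ⟨a, rfl⟩ := natDegree_eq_zero.mp h0
    have : T c1 c2 (C a) = (C c1 - C c2) * C a := by
      rw [T_apply, C_comp]; ring
    rw [this]
    calc ((C c1 - C c2) * C a).natDegree ≤ (C c1 - C c2).natDegree + (C a).natDegree :=
          natDegree_mul_le
      _ ≤ 0 := by
          simp [natDegree_C, le_trans (natDegree_sub_le _ _)]
      _ ≤ _ := Nat.zero_le _
  · set n := Q.natDegree with hn
    have hQne : Q ≠ 0 := fun h => h0 (by simp [hn, h])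
    set Qc := Q.comp (X + 1) with hQc
    have hdc : Qc.natDegree = n := by
      have := natDegree_taylor Q 1
      rw [taylor_apply, C_1] at this
      simpa [hQc] using this
    have hQcne : Qc ≠ 0 := fun h => by simp [h, hn.symm] at hdc; omega
    have hlead : Qc.leadingCoeff = Q.leadingCoeff := by
      have h1 : (X + 1 : Polynomial ℚ).natDegree ≠ 0 := by
        rw [← C_1, natDegree_X_add_C]; exact one_ne_zero
      have hm : (X + 1 : Polynomial ℚ).leadingCoeff = 1 := by
        rw [← C_1]; exact monic_X_add_C 1
      have := leadingCoeff_comp (p := Q) (q := X + 1) h1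
      simpa [hQc, hm] using this
    have hdeg : Qc.degree = Q.degree := by
      rw [degree_eq_natDegree hQcne, degree_eq_natDegree hQne, hdc]
    have hD : (Qc - Q).degree < Q.degree := by
      rw [← hdeg]; exact degree_sub_lt hdeg hQcne hlead
    have hDle : (Qc - Q).natDegree ≤ n - 1 := by
      rcases eq_or_ne (Qc - Q) 0 with h | h
      · simp [h]
      · have := natDegree_lt_natDegree h hD
        omega
    have hsplit : T c1 c2 Q = 3*X*(Qc - Q) + (C c1 * Qc - C c2 * Q) := by
      rw [T_apply]; ring
    rw [hsplit]
    have b1 : (3*X*(Qc - Q)).natDegree ≤ n := by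
      calc (3*X*(Qc - Q)).natDegree ≤ (3*X : Polynomial ℚ).natDegree + (Qc - Q).natDegree :=
            natDegree_mul_le
        _ ≤ 1 + (n-1) := by
            gcongr
            calc (3*X : Polynomial ℚ).natDegree ≤ _ + _ := natDegree_mul_le
              _ ≤ 1 := by simp
        _ ≤ n := by omega
    have b2 : (C c1 * Qc - C c2 * Q).natDegree ≤ n := by
      apply le_trans (natDegree_sub_le _ _)
      simp only [max_le_iff]
      constructor
      · calc (C c1 * Qc).natDegree ≤ _ + _ := natDegree_mul_le
          _ ≤ n := by simp [hdc]
      · calc (C c2 * Q).natDegree ≤ _ + _ := natDegree_mul_le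
          _ ≤ n := by simp [hn.symm]
    exact le_trans (natDegree_add_le _ _) (by omega)

lemma key (s k : ℕ) (hk : 1 ≤ k) (p : Polynomial ℚ) (hp : p.natDegree ≤ k - 1) :
    ∃! r : Polynomial ℚ, r.natDegree ≤ k ∧
      (3 * X + C (3 - (k : ℚ) - (s : ℚ))) * r.comp (X + 1) =
        (3 * X + C (1 - (k : ℚ) - (s : ℚ))) * p +
          (3 * X + C (3 - 3 * (k : ℚ) - (s : ℚ))) * r := by
  set c1 : ℚ := 3 - (k:ℚ) - s
  set c2 : ℚ := 3 - 3*(k:ℚ) - s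
  set c3 : ℚ := 1 - (k:ℚ) - s
  have hinj := T_inj s k hk
  -- the target
  set b : Polynomial ℚ := (3 * X + C c3) * p with hb
  have hbdeg : b.natDegree ≤ k := by
    calc b.natDegree ≤ (3*X + C c3 : Polynomial ℚ).natDegree + p.natDegree :=
          natDegree_mul_le
      _ ≤ 1 + (k - 1) := by
          gcongr
          apply le_trans (natDegree_add_le _ _)
          simp only [max_le_iff, natDegree_C]
          refine ⟨?_, Nat.zero_le _⟩
          calc (3*X : Polynomial ℚ).natDegree ≤ _ + _ := natDegree_mul_le
            _ ≤ 1 := by simp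
      _ ≤ k := by omega
  have memV : ∀ q : Polynomial ℚ, q ∈ degreeLT ℚ (k+1) ↔ q.natDegree ≤ k := by
    intro q
    rw [mem_degreeLT]
    rcases eq_or_ne q 0 with rfl | hq
    · rw [degree_zero]
      simp only [natDegree_zero, Nat.zero_le, iff_true]
      exact_mod_cast WithBot.bot_lt_coe (k+1)
    · rw [degree_eq_natDegree hq]
      exact_mod_cast Nat.lt_succ_iff
  haveI : FiniteDimensional ℚ (degreeLT ℚ (k+1)) :=
    Module.Finite.equiv (degreeLTEquiv ℚ (k+1)).symm
  set φ : degreeLT ℚ (k+1) →ₗ[ℚ] degreeLT ℚ (k+1) :=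
    (T c1 c2).restrict (fun q hq => by
      rw [memV] at hq ⊢
      exact le_trans (T_natDegree_le c1 c2 q) hq)
  have hφinj : Function.Injective φ := by
    intro a b hab
    apply Subtype.ext
    apply hinj
    have := congrArg Subtype.val hab
    simpa [φ, LinearMap.restrict_apply] using this
  have hφsurj : Function.Surjective φ := LinearMap.injective_iff_surjective.mp hφinj
  obtain ⟨⟨r, hrV⟩, hr⟩ := hφsurj ⟨b, (memV b).mpr hbdeg⟩
  have hTr : T c1 c2 r = b := congrArg Subtype.val hr
  refine ⟨r, ⟨(memV r).mp hrV, ?_⟩, ?_⟩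
  · rw [T_apply] at hTr
    rw [sub_eq_iff_eq_add] at hTr
    rw [hTr, hb]
  · rintro r' ⟨_, hr'⟩
    apply hinj
    rw [T_apply, sub_eq_iff_eq_add, hTr, hb]
    rw [hr']

noncomputable def seq (s : ℕ) : ∀ k : ℕ, {p : Polynomial ℚ // p.natDegree ≤ k}
  | 0 => ⟨1, by simp⟩
  | (k+1) =>
    ⟨((key s (k+1) (by omega) (seq s k).1 (by simpa using (seq s k).2)).exists).choose,
      ((key s (k+1) (by omega) (seq s k).1
        (by simpa using (seq s k).2)).exists).choose_spec.1⟩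

lemma seq_spec (s k : ℕ) :
    ((seq s (k+1)).1).natDegree ≤ (k+1) ∧
    (3 * X + C (3 - ((k+1:ℕ) : ℚ) - (s : ℚ))) * ((seq s (k+1)).1).comp (X + 1) =
      (3 * X + C (1 - ((k+1:ℕ) : ℚ) - (s : ℚ))) * (seq s k).1 +
        (3 * X + C (3 - 3 * ((k+1:ℕ) : ℚ) - (s : ℚ))) * (seq s (k+1)).1 :=
  ((key s (k+1) (by omega) (seq s k).1 (by simpa using (seq s k).2)).exists).choose_spec

end Stmt19Aux

theorem stmt19 (s : ℕ) :
    (∃! P : ℕ → Polynomial ℚ,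
      P 0 = 1 ∧
      (∀ k : ℕ, (P k).natDegree ≤ k) ∧
      (∀ k : ℕ, 1 ≤ k →
        (3 * X + C (3 - (k : ℚ) - (s : ℚ))) * (P k).comp (X + 1) =
          (3 * X + C (1 - (k : ℚ) - (s : ℚ))) * P (k - 1) +
            (3 * X + C (3 - 3 * (k : ℚ) - (s : ℚ))) * P k)) ∧
    (∀ P : ℕ → Polynomial ℚ,
      (P 0 = 1 ∧
        (∀ k : ℕ, (P k).natDegree ≤ k) ∧
        (∀ k : ℕ, 1 ≤ k →
          (3 * X + C (3 - (k : ℚ) - (s : ℚ))) * (P k).comp (X + 1) =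
            (3 * X + C (1 - (k : ℚ) - (s : ℚ))) * P (k - 1) +
              (3 * X + C (3 - 3 * (k : ℚ) - (s : ℚ))) * P k)) →
      P 1 = C (1 / 5 : ℚ) * (3 * X - C ((s : ℚ) + 3))) := by
  open Stmt19Aux in
  have hprop : ∀ P : ℕ → Polynomial ℚ,
      (P 0 = 1 ∧
        (∀ k : ℕ, (P k).natDegree ≤ k) ∧
        (∀ k : ℕ, 1 ≤ k →
          (3 * X + C (3 - (k : ℚ) - (s : ℚ))) * (P k).comp (X + 1) =
            (3 * X + C (1 - (k : ℚ) - (s : ℚ))) * P (k - 1) +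
              (3 * X + C (3 - 3 * (k : ℚ) - (s : ℚ))) * P k)) →
      ∀ k, P k = (seq s k).1 := by
    rintro P ⟨h0, hdeg, hrec⟩ k
    induction k with
    | zero => exact h0
    | succ m ih =>
      have hu := key s (m+1) (by omega) ((seq s m).1) (by simpa using (seq s m).2)
      refine hu.unique ⟨hdeg (m+1), ?_⟩ ⟨(seq_spec s m).1, (seq_spec s m).2⟩
      have := hrec (m+1) (by omega)
      simpa [ih] using this
  constructor
  · refine ⟨fun k => (seq s k).1, ⟨rfl, fun k => (seq s k).2, ?_⟩, ?_⟩
    · intro k hk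
      obtain ⟨m, rfl⟩ := Nat.exists_eq_succ_of_ne_zero (by omega : k ≠ 0)
      simpa using (seq_spec s m).2
    · intro P hP
      funext k
      exact hprop P hP k
  · rintro P hP
    have h1 := hprop P hP 1
    rw [h1]
    have hu := key s 1 (by omega) ((seq s 0).1) (by simpa using (seq s 0).2)
    refine hu.unique ⟨(seq_spec s 0).1, (seq_spec s 0).2⟩ ⟨?_, ?_⟩
    · calc (C (1/5 : ℚ) * (3 * X - C ((s:ℚ) + 3))).natDegree
          ≤ _ + _ := natDegree_mul_le
        _ ≤ 1 := by
            simp only [natDegree_C, zero_add]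
            apply le_trans (natDegree_sub_le _ _)
            simp only [max_le_iff, natDegree_C]
            refine ⟨?_, Nat.zero_le _⟩
            calc (3*X : Polynomial ℚ).natDegree ≤ _ + _ := natDegree_mul_le
              _ ≤ 1 := by simp
    · have hs0 : (seq s 0).1 = 1 := rfl
      rw [hs0]
      apply Polynomial.funext
      intro x
      simp only [eval_mul, eval_add, eval_sub, eval_comp, eval_C, eval_X, eval_one,
        eval_ofNat]
      push_cast
      ring
end
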